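/- arXiv:1910.08830 — 4 statements merged into one kernel-verified Lean document; each statement's English description precedes it below -/
import Mathlib

section
/- Let p be a prime, G a finite group, U ≤ G a p-subgroup, B ≤ N_G(U) a subgroup of order prime to p, and H = BU. Let χ be a class function on H and ψ a class function on B, let Inf ψ be the class function on H given by (Inf ψ)(bu) = ψ(b) for b ∈ B, u ∈ U, and set γ = Ind_H^G(χ · Inf ψ) (pointwise product). Let s, v ∈ G be commuting elements, sv = vs, where the order of s is prime to p and v is a p-element. If s is not G-conjugate to any element of B, then γ(sv) = 0. -/
open scoped BigOperators Pointwise Classical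

/-- Induction of class functions inside an ambient finite group `G`: for subgroups
`K ≤ L ≤ G` and `f : G → ℂ` (whose values on `K` are the only relevant ones),
`Ind_K^L(f)(g) = |K|⁻¹ ∑_{x ∈ L, x g x⁻¹ ∈ K} f (x g x⁻¹)`. -/
noncomputable def indRel {G : Type*} [Group G] [Fintype G]
    (K L : Subgroup G) (f : G → ℂ) : G → ℂ :=
  fun g => (Nat.card K : ℂ)⁻¹ *
    ∑ x : G, if x ∈ L ∧ x * g * x⁻¹ ∈ K then f (x * g * x⁻¹) else 0

section Aux

variable {G : Type*} [Group G]

lemma aux_orderOf_conj (g x : G) : orderOf (g * x * g⁻¹) = orderOf x := by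
  simpa [MulAut.conj_apply] using
    orderOf_injective (MulAut.conj g).toMonoidHom (MulAut.conj g).injective x

/-- Triviality of intersection of a p-group with a p'-group. -/
lemma aux_inter_triv {p : ℕ} (hp : p.Prime) {U B : Subgroup G} (hU : IsPGroup p U)
    (hB : (Nat.card B).Coprime p) {x : G} (hxU : x ∈ U) (hxB : x ∈ B) : x = 1 := by
  obtain ⟨k, hk⟩ := hU ⟨x, hxU⟩
  have hordpow : orderOf x ∣ p ^ k := by
    have h1 : (⟨x, hxU⟩ : U) ^ (p ^ k) = 1 := hk
    have h2 := orderOf_dvd_of_pow_eq_one h1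
    rwa [Subgroup.orderOf_mk] at h2
  have hdvd : orderOf x ∣ Nat.card B := B.orderOf_dvd_natCard hxB
  have hco : (Nat.card B).Coprime (p ^ k) := hB.pow_right _
  have h1 : orderOf x ∣ Nat.gcd (Nat.card B) (p ^ k) := Nat.dvd_gcd hdvd hordpow
  rw [hco] at h1
  rw [← orderOf_eq_one_iff]
  exact Nat.eq_one_of_dvd_one h1

lemma aux_le_normalizer {B U : Subgroup G} (h : ∀ b ∈ B, ∀ u ∈ U, b * u * b⁻¹ ∈ U) :
    B ≤ Subgroup.normalizer (U : Set G) := by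
  intro b hb
  rw [Subgroup.mem_normalizer_iff]
  intro u
  constructor
  · exact fun hu => h b hb u hu
  · intro hu
    have h2 := h b⁻¹ (inv_mem hb) _ hu
    have h3 : b⁻¹ * (b * u * b⁻¹) * b⁻¹⁻¹ = u := by group
    rwa [h3] at h2

open scoped IsMulCommutative in
/-- The abelian case: if `U` is a commutative `p`-subgroup normalized by `B`,
`|B|` prime to `p`, and `c = b * u` has order prime to `p`, then `c` is conjugate
(by an element of `U`) into `B`. -/
lemma aux_abelian {p : ℕ} (hp : p.Prime) (U B : Subgroup G) (hUc : IsMulCommutative U)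
    (hU : IsPGroup p U) (hBn : B ≤ Subgroup.normalizer (U : Set G)) (hB : (Nat.card B).Coprime p)
    (c : G) (hc : (orderOf c).Coprime p) (hc0 : orderOf c ≠ 0)
    (b u : G) (hb : b ∈ B) (hu : u ∈ U) (hcbu : c = b * u) :
    ∃ z ∈ U, z * c * z⁻¹ ∈ B := by
  haveI := hUc
  have hconj : ∀ x : G, x ∈ U → b⁻¹ * x * b ∈ U := by
    intro x hx
    refine (Subgroup.mem_normalizer_iff.mp (hBn hb) (b⁻¹ * x * b)).mpr ?_
    have : b * (b⁻¹ * x * b) * b⁻¹ = x := by group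
    rwa [this]
  let τ : U →* U :=
    { toFun := fun x => ⟨b⁻¹ * ↑x * b, hconj _ x.2⟩
      map_one' := by ext; simp
      map_mul' := fun x y => by
        ext
        show b⁻¹ * ↑(x * y) * b = (b⁻¹ * ↑x * b) * (b⁻¹ * ↑y * b)
        rw [Subgroup.coe_mul]
        group }
  have hτcoe : ∀ x : U, ((τ x : U) : G) = b⁻¹ * ↑x * b := fun _ => rfl
  set ub : U := ⟨u, hu⟩ with hub
  set w : ℕ → U := fun k => ∏ i ∈ Finset.range k, (τ^[i]) ub with hwdef
  have hw0 : w 0 = 1 := by simp [hwdef]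
  have hwsucc : ∀ k, w (k + 1) = τ (w k) * ub := by
    intro k
    have h1 : τ (w k) = ∏ i ∈ Finset.range k, (τ^[i + 1]) ub := by
      rw [hwdef]
      rw [map_prod]
      exact Finset.prod_congr rfl fun i _ => (Function.iterate_succ_apply' τ i ub).symm
    have h2 := Finset.prod_range_succ' (fun i => (τ^[i]) ub) k
    simp only [Function.iterate_zero_apply] at h2
    rw [hwdef]
    simp only []
    rw [h2, ← h1]
  have hA : ∀ k, (b * u) ^ k = b ^ k * ↑(w k) := by
    intro k
    induction k with
    | zero => simp [hw0]
    | succ k ih =>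
      rw [pow_succ, ih, pow_succ, hwsucc k]
      have : ((τ (w k) * ub : U) : G) = (b⁻¹ * ↑(w k) * b) * u := by
        rw [Subgroup.coe_mul, hτcoe]
      rw [this]
      group
  set q := orderOf c with hq
  have hcq : c ^ q = 1 := pow_orderOf_eq_one c
  have hbqwq : b ^ q * ↑(w q) = 1 := by rw [← hA, ← hcbu, hcq]
  have hbqU : b ^ q ∈ U := by
    have : b ^ q = (↑(w q) : G)⁻¹ := by
      rw [eq_inv_iff_mul_eq_one]; exact hbqwq
    rw [this]; exact inv_mem (w q).2
  have hbq1 : b ^ q = 1 := aux_inter_triv hp hU hB hbqU (pow_mem hb q)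
  have hwq1 : w q = 1 := by
    have : (↑(w q) : G) = 1 := by
      have := hbqwq; rw [hbq1, one_mul] at this; exact this
    exact Subtype.ext this
  set W : U := ∏ k ∈ Finset.range q, w k with hW
  have hτW : τ W = W * (ub ^ q)⁻¹ := by
    have h1 : τ W = ∏ k ∈ Finset.range q, (w (k + 1) * ub⁻¹) := by
      rw [hW, map_prod]
      refine Finset.prod_congr rfl fun k _ => ?_
      rw [hwsucc k, mul_inv_cancel_right]
    rw [h1, Finset.prod_mul_distrib, Finset.prod_const, Finset.card_range]
    have h2 : ∏ k ∈ Finset.range q, w (k + 1) = W := by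
      have h3 := Finset.prod_range_succ' w q
      rw [Finset.prod_range_succ, hwq1, mul_one, hw0, mul_one] at h3
      rw [← h3, hW]
    rw [h2, inv_pow]
  obtain ⟨m, hm⟩ := exists_pow_eq_self_of_coprime (x := ub) (n := q) (by
    obtain ⟨k, hk⟩ := hU ub
    have hdvd : orderOf ub ∣ p ^ k := orderOf_dvd_of_pow_eq_one hk
    exact Nat.Coprime.coprime_dvd_right hdvd (hc.pow_right k))
  set z : U := W ^ m with hz
  have hτz : τ z = z * ub⁻¹ := by
    rw [hz, map_pow, hτW, mul_pow]
    congr 1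
    rw [inv_pow, hm]
  refine ⟨↑z, z.2, ?_⟩
  have h5 : b⁻¹ * ↑z * b = ↑z * u⁻¹ := by
    have := congrArg (Subtype.val : U → G) hτz
    rw [hτcoe] at this
    simpa [hub] using this
  have h6 : (↑z : G) * c * (↑z : G)⁻¹ = b := by
    rw [hcbu]
    calc (↑z : G) * (b * u) * (↑z : G)⁻¹
        = b * ((b⁻¹ * ↑z * b) * u * (↑z : G)⁻¹) := by group
      _ = b * ((↑z * u⁻¹) * u * (↑z : G)⁻¹) := by rw [h5]
      _ = b := by group
  rw [h6]; exact hb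

lemma aux_card_map {G' : Type*} [Group G'] (f : G →* G') (H : Subgroup G) :
    Nat.card H = Nat.card (H.map f) * Nat.card (f.comp H.subtype).ker := by
  have e1 := Subgroup.card_eq_card_quotient_mul_card_subgroup (f.comp H.subtype).ker
  rw [e1]
  congr 1
  have h2 : (f.comp H.subtype).range = H.map f := by
    rw [MonoidHom.range_comp, Subgroup.range_subtype]
  calc Nat.card (H ⧸ (f.comp H.subtype).ker)
      = Nat.card (f.comp H.subtype).range :=
        Nat.card_congr (QuotientGroup.quotientKerEquivRange (f.comp H.subtype)).toEquiv
    _ = Nat.card (H.map f) := by rw [h2]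

end Aux

/-- Main induction: a `p'`-element of `B * U` is `U`-conjugate into `B`. -/
lemma aux_main {p : ℕ} (hp : p.Prime) : ∀ (n : ℕ) {G : Type*} [Group G] [Finite G]
    (U B : Subgroup G), Nat.card U ≤ n → IsPGroup p U → B ≤ Subgroup.normalizer (U : Set G) →
    (Nat.card B).Coprime p → ∀ c : G, (orderOf c).Coprime p →
    c ∈ (B : Set G) * (U : Set G) → ∃ z ∈ U, z * c * z⁻¹ ∈ B := by
  intro n
  induction n using Nat.strong_induction_on with
  | _ n ih =>
    intro G _ _ U B hcard hU hBn hB c hc hmem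
    obtain ⟨b, hb, u, hu, hbu⟩ := hmem
    have hcbu : c = b * u := hbu.symm
    have hc0 : orderOf c ≠ 0 := (orderOf_pos c).ne'
    by_cases hcomm : ∀ x ∈ U, ∀ y ∈ U, x * y = y * x
    · exact aux_abelian hp U B ⟨⟨fun a b' => Subtype.ext (hcomm a a.2 b' b'.2)⟩⟩
        hU hBn hB c hc hc0 b u hb hu hcbu
    -- non-abelian case
    · set K := Subgroup.normalizer (U : Set G) with hK
      have hUK : U ≤ K := Subgroup.le_normalizer
      have hBK : B ≤ K := hBn
      set Z : Subgroup G := Subgroup.centralizer (U : Set G) ⊓ U with hZ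
      have hZU : Z ≤ U := inf_le_right
      have hZcomm : IsMulCommutative Z := by
        refine ⟨⟨fun x y => Subtype.ext ?_⟩⟩
        have hx := (Subgroup.mem_inf.mp x.2).1
        have hy := (Subgroup.mem_inf.mp y.2).2
        exact (Subgroup.mem_centralizer_iff.mp hx ↑y hy).symm
      have hKZ : ∀ k ∈ K, ∀ x ∈ Z, k * x * k⁻¹ ∈ Z := by
        intro k hk x hx
        rw [Subgroup.mem_inf]
        refine ⟨?_, (Subgroup.mem_normalizer_iff.mp hk x).mp (hZU hx)⟩
        rw [Subgroup.mem_centralizer_iff]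
        intro y hy
        have h1 : k⁻¹ * y * k ∈ U := by
          refine (Subgroup.mem_normalizer_iff.mp hk (k⁻¹ * y * k)).mpr ?_
          have : k * (k⁻¹ * y * k) * k⁻¹ = y := by group
          rwa [this]
        have h2 := Subgroup.mem_centralizer_iff.mp (Subgroup.mem_inf.mp hx).1 _ h1
        calc y * (k * x * k⁻¹) = k * ((k⁻¹ * y * k) * x) * k⁻¹ := by group
          _ = k * (x * (k⁻¹ * y * k)) * k⁻¹ := by rw [h2]
          _ = (k * x * k⁻¹) * y := by group
      -- nontrivial center element
      have hnontrivU : Nontrivial U := by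
        by_contra hnt
        have hsub : Subsingleton U := not_nontrivial_iff_subsingleton.mp hnt
        refine hcomm fun x hx y hy => ?_
        have hx1 : (⟨x, hx⟩ : U) = 1 := Subsingleton.elim _ _
        have : x = 1 := congrArg Subtype.val hx1
        rw [this, one_mul, mul_one]
      haveI := hnontrivU
      haveI : Fact p.Prime := ⟨hp⟩
      have hZnt := hU.center_nontrivial
      obtain ⟨ζ0, hζ0ne⟩ := exists_ne (1 : Subgroup.center U)
      have hζZ : ((ζ0 : U) : G) ∈ Z := by
        rw [hZ, Subgroup.mem_inf]
        refine ⟨?_, (ζ0 : U).2⟩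
        rw [Subgroup.mem_centralizer_iff]
        intro y hy
        have := (Subgroup.mem_center_iff.mp ζ0.2) ⟨y, hy⟩
        exact congrArg Subtype.val this
      have hζne1 : ((ζ0 : U) : G) ≠ 1 := by
        intro h
        apply hζ0ne
        ext
        exact h
      -- quotient by Z inside K
      set Z' := Z.subgroupOf K with hZ'
      haveI hZ'n : Z'.Normal := by
        constructor
        intro x hx g
        rw [Subgroup.mem_subgroupOf] at hx ⊢
        exact hKZ ↑g g.2 ↑x hx
      set π : K →* K ⧸ Z' := QuotientGroup.mk' Z' with hπ
      have hπker : π.ker = Z' := QuotientGroup.ker_mk' Z'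
      set Ub := (U.subgroupOf K).map π with hUb
      set Bb := (B.subgroupOf K).map π with hBb
      -- cardinalities
      have hcardU : Nat.card (U.subgroupOf K) = Nat.card U :=
        Nat.card_congr (Subgroup.subgroupOfEquivOfLe hUK).toEquiv
      have hcardB : Nat.card (B.subgroupOf K) = Nat.card B :=
        Nat.card_congr (Subgroup.subgroupOfEquivOfLe hBK).toEquiv
      have hUbdvd := aux_card_map π (U.subgroupOf K)
      have hBbdvd := aux_card_map π (B.subgroupOf K)
      -- the kernel of π restricted to U.subgroupOf K is nontrivial
      have hkernt : Nontrivial (π.comp (U.subgroupOf K).subtype).ker := by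
        have hζK : ((ζ0 : U) : G) ∈ K := hUK (ζ0 : U).2
        have hζU' : (⟨((ζ0 : U) : G), hζK⟩ : K) ∈ U.subgroupOf K := by
          rw [Subgroup.mem_subgroupOf]; exact (ζ0 : U).2
        have hmemker : (⟨⟨((ζ0 : U) : G), hζK⟩, hζU'⟩ : U.subgroupOf K)
            ∈ (π.comp (U.subgroupOf K).subtype).ker := by
          rw [MonoidHom.mem_ker]
          show π ⟨((ζ0 : U) : G), hζK⟩ = 1
          rw [← MonoidHom.mem_ker, hπker, Subgroup.mem_subgroupOf]
          exact hζZ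
        refine ⟨⟨⟨_, hmemker⟩, 1, ?_⟩⟩
        intro h
        apply hζne1
        have := congrArg Subtype.val (congrArg Subtype.val (congrArg Subtype.val h))
        exact this
      have hcardUb_lt : Nat.card Ub < Nat.card U := by
        rw [← hcardU, hUbdvd]
        have h1 : 0 < Nat.card Ub := Nat.card_pos
        have h2 : 1 < Nat.card (π.comp (U.subgroupOf K).subtype).ker :=
          Finite.one_lt_card
        exact lt_mul_of_one_lt_right h1 h2
      -- IH hypotheses
      have hUb_p : IsPGroup p Ub :=
        (hU.of_equiv (Subgroup.subgroupOfEquivOfLe hUK).symm).map π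
      have hBb_n : Bb ≤ Subgroup.normalizer (Ub : Set (K ⧸ Z')) := by
        refine aux_le_normalizer ?_
        rintro x hx y hy
        rw [hBb, Subgroup.mem_map] at hx
        rw [hUb, Subgroup.mem_map] at hy
        obtain ⟨b', hb', rfl⟩ := hx
        obtain ⟨u', hu', rfl⟩ := hy
        rw [hUb, Subgroup.mem_map]
        refine ⟨b' * u' * b'⁻¹, ?_, by simp⟩
        rw [Subgroup.mem_subgroupOf] at hb' hu' ⊢
        push_cast
        exact (Subgroup.mem_normalizer_iff.mp (hBn hb') ↑u').mp hu'
      have hBb_co : (Nat.card Bb).Coprime p := by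
        refine Nat.Coprime.coprime_dvd_left ?_ hB
        rw [← hcardB, hBbdvd]
        exact dvd_mul_right _ _
      -- the element
      have hcK : c ∈ K := by rw [hcbu]; exact mul_mem (hBK hb) (hUK hu)
      set cK : K := ⟨c, hcK⟩ with hcK'
      set cb := π cK with hcb
      have hcb_co : (orderOf cb).Coprime p := by
        refine Nat.Coprime.coprime_dvd_left ?_ hc
        calc orderOf cb ∣ orderOf cK := orderOf_map_dvd π cK
          _ = orderOf c := Subgroup.orderOf_mk c hcK
      have hcb_mem : cb ∈ (Bb : Set (K ⧸ Z')) * (Ub : Set (K ⧸ Z')) := by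
        have hbK : b ∈ K := hBK hb
        have huK : u ∈ K := hUK hu
        refine ⟨π ⟨b, hbK⟩, ?_, π ⟨u, huK⟩, ?_, ?_⟩
        · exact Subgroup.mem_map.mpr ⟨⟨b, hbK⟩, Subgroup.mem_subgroupOf.mpr hb, rfl⟩
        · exact Subgroup.mem_map.mpr ⟨⟨u, huK⟩, Subgroup.mem_subgroupOf.mpr hu, rfl⟩
        · show π ⟨b, hbK⟩ * π ⟨u, huK⟩ = cb
          rw [← map_mul]
          congr 1
          ext
          exact hbu
      -- apply IH
      obtain ⟨zb, hzbU, hzbB⟩ := ih (Nat.card Ub) (lt_of_lt_of_le hcardUb_lt hcard)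
        Ub Bb (le_refl _) hUb_p hBb_n hBb_co cb hcb_co hcb_mem
      obtain ⟨z₀, hz₀U, rfl⟩ := Subgroup.mem_map.mp hzbU
      have hconj_mem : π (z₀ * cK * z₀⁻¹) ∈ Bb := by
        rw [map_mul, map_mul, map_inv]
        exact hzbB
      obtain ⟨b₁, hb₁, hb₁eq⟩ := Subgroup.mem_map.mp hconj_mem
      -- b₁ ζ₁ = z₀ cK z₀⁻¹ for some ζ₁ ∈ Z'
      rw [hπ] at hb₁eq
      obtain ⟨ζ₁, hζ₁, hζ₁eq⟩ := (QuotientGroup.mk'_eq_mk' (N := Z')).mp hb₁eq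
      -- now in G
      have hGeq : (↑z₀ : G) * c * (↑z₀ : G)⁻¹ = ↑b₁ * ↑ζ₁ :=
        (congrArg (Subtype.val : K → G) hζ₁eq).symm
      have hz₀U' : (↑z₀ : G) ∈ U := Subgroup.mem_subgroupOf.mp hz₀U
      have hb₁B : (↑b₁ : G) ∈ B := Subgroup.mem_subgroupOf.mp hb₁
      have hζ₁Z : (↑ζ₁ : G) ∈ Z := Subgroup.mem_subgroupOf.mp hζ₁
      -- abelian case with Z
      have hordc' : orderOf ((↑z₀ : G) * c * (↑z₀ : G)⁻¹) = orderOf c :=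
        aux_orderOf_conj _ _
      obtain ⟨z₂, hz₂Z, hz₂B⟩ := aux_abelian hp Z B hZcomm (hU.to_le hZU)
        (aux_le_normalizer fun b' hb' x hx => hKZ b' (hBK hb') x hx) hB
        ((↑z₀ : G) * c * (↑z₀ : G)⁻¹) (by rw [hordc']; exact hc)
        (by rw [hordc']; exact hc0) ↑b₁ ↑ζ₁ hb₁B hζ₁Z hGeq
      refine ⟨z₂ * ↑z₀, mul_mem (hZU hz₂Z) hz₀U', ?_⟩
      have hre : (z₂ * ↑z₀) * c * (z₂ * ↑z₀)⁻¹
          = z₂ * ((↑z₀ : G) * c * (↑z₀ : G)⁻¹) * z₂⁻¹ := by group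
      rw [hre]
      exact hz₂B

/-- Let `p` be a prime, `G` a finite group, `U` a `p`-subgroup, `B ≤ N_G(U)` of order
prime to `p`, and `H = BU`.  Let `χ` be a class function on `H`, `ψ` a class function on
`B`, `Inf ψ` its inflation to `H` (so `(Inf ψ)(bu) = ψ(b)`), and
`γ = Ind_H^G(χ · Inf ψ)`.  If `s v = v s` with the order of `s` prime to `p` and `v` a
`p`-element, and `s` is not `G`-conjugate to an element of `B`, then `γ(sv) = 0`. -/
theorem stmt5 {G : Type*} [Group G] [Fintype G] (p : ℕ) (hp : p.Prime)
    (U B H : Subgroup G) (hU : IsPGroup p U) (hBnorm : B ≤ Subgroup.normalizer (U : Set G))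
    (hB : (Nat.card B).Coprime p)
    (hH : (H : Set G) = (B : Set G) * (U : Set G))
    (χ ψ inflψ : G → ℂ)
    (hχ : ∀ h ∈ H, ∀ x ∈ H, χ (x * h * x⁻¹) = χ h)
    (hψ : ∀ b ∈ B, ∀ x ∈ B, ψ (x * b * x⁻¹) = ψ b)
    (hinfl : ∀ b ∈ B, ∀ u ∈ U, inflψ (b * u) = ψ b)
    (s v : G) (hsv : s * v = v * s)
    (hs : (orderOf s).Coprime p) (hv : ∃ n : ℕ, orderOf v = p ^ n)
    (hnot : ¬ ∃ b ∈ B, ∃ g : G, g * s * g⁻¹ = b) :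
    indRel H ⊤ (fun g => χ g * inflψ g) (s * v) = 0 := by
  unfold indRel
  rw [mul_eq_zero]
  right
  apply Finset.sum_eq_zero
  intro x _
  rw [if_neg]
  rintro ⟨-, hxH⟩
  set c := x * s * x⁻¹ with hc
  set d := x * v * x⁻¹ with hd
  have h1 : x * (s * v) * x⁻¹ = c * d := by rw [hc, hd]; group
  have hcd : c * d = d * c := by
    rw [hc, hd]
    have e1 : (x * s * x⁻¹) * (x * v * x⁻¹) = x * (s * v) * x⁻¹ := by group
    have e2 : (x * v * x⁻¹) * (x * s * x⁻¹) = x * (v * s) * x⁻¹ := by group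
    rw [e1, e2, hsv]
  have hoc : orderOf c = orderOf s := aux_orderOf_conj x s
  have hod : orderOf d = orderOf v := aux_orderOf_conj x v
  obtain ⟨n, hn⟩ := hv
  have hco : (orderOf c).Coprime (orderOf d) := by
    rw [hoc, hod, hn]
    exact hs.pow_right n
  -- find m with (c*d)^m = c
  obtain ⟨hm1, hm2⟩ := (Nat.chineseRemainder hco 1 0).2
  have hcm : c ^ ((Nat.chineseRemainder hco 1 0) : ℕ) = c := by
    have := (pow_eq_pow_iff_modEq (x := c)
      (n := ((Nat.chineseRemainder hco 1 0) : ℕ)) (m := 1)).mpr hm1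
    rwa [pow_one] at this
  have hdm : d ^ ((Nat.chineseRemainder hco 1 0) : ℕ) = 1 := by
    have := (pow_eq_pow_iff_modEq (x := d)
      (n := ((Nat.chineseRemainder hco 1 0) : ℕ)) (m := 0)).mpr hm2
    rwa [pow_zero] at this
  have hpow : (c * d) ^ ((Nat.chineseRemainder hco 1 0) : ℕ) = c := by
    rw [(Commute.mul_pow hcd _ : (c * d) ^ _ = _), hcm, hdm, mul_one]
  -- c ∈ H
  have hcH : c ∈ H := by
    rw [← hpow, ← h1]
    exact pow_mem hxH _
  have hcmem : c ∈ (B : Set G) * (U : Set G) := by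
    rw [← hH]
    exact hcH
  obtain ⟨z, hzU, hzB⟩ := aux_main hp (Nat.card U) U B (le_refl _) hU hBnorm hB c
    (by rw [hoc]; exact hs) hcmem
  refine hnot ⟨z * c * z⁻¹, hzB, z * x, ?_⟩
  rw [hc]
  group
end

section
/- Let p be a prime, G a finite group, U ≤ G a p-subgroup, B ≤ N_G(U) a subgroup of order prime to p, and H = BU. Let χ be a class function on H and ψ a class function on B, let Inf ψ be the class function on H given by (Inf ψ)(bu) = ψ(b) for b ∈ B, u ∈ U, and set γ = Ind_H^G(χ · Inf ψ) (pointwise product). Let s, v ∈ G be commuting elements, sv = vs, where the order of s is prime to p, v is a p-element, and s ∈ B. For each t ∈ B that is G-conjugate to s choose x_t ∈ G with x_t·s·x_t⁻¹ = t and set v_t = x_t·v·x_t⁻¹. Then γ(sv) = |B|⁻¹ Σ_{t ∈ B, t G-conjugate to s} ψ(t) · Ind_{C_U(t)}^{C_G(t)}(t·χ)(v_t), where t·χ is the class function on C_U(t) defined by (t·χ)(g) = χ(tg); the right-hand side is independent of all the choices of the elements x_t. -/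
open scoped BigOperators Pointwise Classical

lemma abelianStep {p : ℕ} {L : Type*} [Group L] [Finite L] (hp : p.Prime) (Z : Subgroup L)
    (hZn : Z.Normal) (hcomm : ∀ x ∈ Z, ∀ y ∈ Z, x * y = y * x) (hZ : IsPGroup p Z)
    (a b : L) (ha : (orderOf a).Coprime p) (hb : (orderOf b).Coprime p)
    (hz : b⁻¹ * a ∈ Z) : ∃ u ∈ Z, u * a * u⁻¹ = b := by
  haveI : Fact p.Prime := ⟨hp⟩
  set z : L := b⁻¹ * a with hzdef
  set c : ℕ → L := fun j => b⁻¹ ^ j * a ^ j with hcdef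
  have hcsucc : ∀ j, c (j + 1) = b⁻¹ * c j * b * z := by
    intro j
    simp only [hcdef, hzdef]
    group
  have hcZ : ∀ j, c j ∈ Z := by
    intro j; induction j with
    | zero => simpa [hcdef] using Z.one_mem
    | succ j ih =>
      rw [hcsucc j]
      exact Z.mul_mem (by simpa using hZn.conj_mem _ ih b⁻¹) hz
  set W : ℕ → L := fun n => Nat.rec 1 (fun j Wj => Wj * c j) n with hWdef
  have hWsucc : ∀ n, W (n + 1) = W n * c n := fun n => rfl
  have hWZ : ∀ n, W n ∈ Z := by
    intro n; induction n with
    | zero => exact Z.one_mem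
    | succ n ih => rw [hWsucc]; exact Z.mul_mem ih (hcZ n)
  have hτW : ∀ n, b⁻¹ * W n * b * z ^ n = W n * c n := by
    intro n; induction n with
    | zero => simp [hWdef, hcdef]
    | succ n ih =>
      rw [hWsucc, pow_succ]
      have h1 : b⁻¹ * (W n * c n) * b = (b⁻¹ * W n * b) * (b⁻¹ * c n * b) := by group
      rw [h1]
      have h2 : (b⁻¹ * c n * b) * z ^ n = z ^ n * (b⁻¹ * c n * b) :=
        hcomm _ (by simpa using hZn.conj_mem _ (hcZ n) b⁻¹) _ (Z.pow_mem hz n)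
      calc b⁻¹ * W n * b * (b⁻¹ * c n * b) * (z ^ n * z)
          = (b⁻¹ * W n * b * z ^ n) * (b⁻¹ * c n * b * z) := by
            rw [mul_assoc (b⁻¹ * W n * b), ← mul_assoc (b⁻¹ * c n * b), h2]; group
        _ = (W n * c n) * c (n + 1) := by rw [ih, hcsucc]
        _ = W n * c n * c (n + 1) := rfl
  set m := orderOf a * orderOf b with hm
  have hom_a : 0 < orderOf a := orderOf_pos a
  have hom_b : 0 < orderOf b := orderOf_pos b
  have hm1 : 1 ≤ m := Nat.one_le_iff_ne_zero.mpr (Nat.mul_ne_zero hom_a.ne' hom_b.ne')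
  have hcm : c m = 1 := by
    rw [hcdef]
    have h1 : a ^ m = 1 := by rw [hm, pow_mul, pow_orderOf_eq_one, one_pow]
    have h2 : (b⁻¹ : L) ^ m = 1 := by
      rw [hm, mul_comm, pow_mul, inv_pow, pow_orderOf_eq_one, inv_one, one_pow]
    simp [h1, h2]
  set w : L := W m with hw
  have hwZ : w ∈ Z := hWZ m
  have hτw : b⁻¹ * w * b = w * (z ^ m)⁻¹ := by
    have h0 := hτW m
    rw [hcm, mul_one, ← hw] at h0
    rw [eq_comm, mul_inv_eq_iff_eq_mul]
    exact h0.symm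
  -- invert m mod card Z
  obtain ⟨k, hk⟩ := hZ.exists_card_eq
  have hmcop : m.Coprime (Nat.card ↥Z) := by
    rw [hk]
    exact Nat.Coprime.pow_right k (Nat.Coprime.mul ha hb)
  have hcardpos : 0 < Nat.card ↥Z := Nat.card_pos
  set m' := m ^ (Nat.totient (Nat.card ↥Z) - 1) with hm'
  have hm'1 : 1 ≤ m' := Nat.one_le_iff_ne_zero.mpr (pow_ne_zero _ (by omega))
  have hmm' : Nat.card ↥Z ∣ m * m' - 1 := by
    have h1 : m * m' = m ^ Nat.totient (Nat.card ↥Z) := by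
      rw [hm', ← pow_succ']
      congr 1
      have := Nat.totient_pos.mpr hcardpos
      omega
    have h2 := Nat.ModEq.pow_totient hmcop
    rw [← h1] at h2
    exact (Nat.modEq_iff_dvd' (Nat.mul_pos hm1 hm'1 : 0 < m * m')).mp h2.symm
  have hzmm' : z ^ (m * m') = z := by
    have h1 : m * m' = (m * m' - 1) + 1 := by
      have := Nat.mul_pos hm1 hm'1; omega
    have h2 : z ^ (m * m' - 1) = 1 := by
      have hdvd : orderOf z ∣ m * m' - 1 := by
        refine dvd_trans ?_ hmm'
        have h5 := orderOf_dvd_natCard (⟨z, hz⟩ : ↥Z)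
        rwa [← Subgroup.orderOf_coe (⟨z, hz⟩ : ↥Z)] at h5
      exact orderOf_dvd_iff_pow_eq_one.mp hdvd
    rw [h1, pow_succ, h2, one_mul]
  set u : L := w ^ m' with hu
  have huZ : u ∈ Z := Z.pow_mem hwZ m'
  have hτu : b⁻¹ * u * b = u * z⁻¹ := by
    have h1 : b⁻¹ * u * b = (b⁻¹ * w * b) ^ m' := by
      have h0 := map_pow (MulAut.conj b⁻¹) w m'
      simp only [MulAut.conj_apply, inv_inv] at h0
      rw [hu, ← h0]
    rw [h1, hτw]
    have h2 : Commute w ((z ^ m)⁻¹) := hcomm _ hwZ _ (Z.inv_mem (Z.pow_mem hz m))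
    rw [h2.mul_pow, inv_pow, ← pow_mul, hzmm', hu]
  refine ⟨u, huZ, ?_⟩
  have h2 : b⁻¹ * u = u * a⁻¹ := by
    have h3 := congrArg (· * b⁻¹) hτu
    simp only [mul_assoc, mul_inv_cancel, mul_one] at h3
    rw [h3, hzdef]
    group
  have h3 : u * a = b * u := by
    have h4 := congrArg (fun t => b * t * a) h2
    calc u * a = b * (b⁻¹ * u) * a := by group
      _ = b * (u * a⁻¹) * a := by rw [h2]
      _ = b * u := by group
  rw [h3]
  group

universe u

lemma factC {p : ℕ} (hp : p.Prime) : ∀ (n : ℕ) (L : Type u) [Group L] [Finite L]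
    (V : Subgroup L), V.Normal → IsPGroup p V → Nat.card V = n →
    ∀ a b : L, (orderOf a).Coprime p → (orderOf b).Coprime p → b⁻¹ * a ∈ V →
    ∃ u ∈ V, u * a * u⁻¹ = b := by
  haveI : Fact p.Prime := ⟨hp⟩
  intro n
  induction n using Nat.strong_induction_on with
  | _ n IH =>
    intro L _ _ V hVn hV hcard a b ha hb hab
    rcases eq_or_ne n 1 with h1 | h1
    · -- trivial V
      have hbot : V = ⊥ := Subgroup.card_eq_one.mp (hcard.trans h1)
      rw [hbot, Subgroup.mem_bot] at hab
      have : a = b := by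
        rw [inv_mul_eq_one] at hab; exact hab.symm
      exact ⟨1, V.one_mem, by simp [this]⟩
    · have hn1 : 1 < Nat.card ↥V := by
        have := Nat.card_pos (α := ↥V)
        omega
      haveI : Nontrivial ↥V := Finite.one_lt_card_iff_nontrivial.mp hn1
      -- the center
      set Z : Subgroup L := Subgroup.centralizer (V : Set L) ⊓ V with hZdef
      have hZle : Z ≤ V := inf_le_right
      have hZcomm : ∀ x ∈ Z, ∀ y ∈ Z, x * y = y * x := by
        intro x hx y hy
        exact (Subgroup.mem_centralizer_iff.mp hx.1 y (hZle hy)).symm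
      have hZn : Z.Normal := by
        constructor
        intro z hz g
        refine Subgroup.mem_inf.mpr ⟨?_, hVn.conj_mem z hz.2 g⟩
        rw [Subgroup.mem_centralizer_iff]
        intro h hh
        have hh' : g⁻¹ * h * g ∈ V := by
          simpa using hVn.conj_mem h hh g⁻¹
        have e := Subgroup.mem_centralizer_iff.mp hz.1 _ hh'
        have e2 := congrArg (fun t => g * t * g⁻¹) e
        simp only [mul_assoc, inv_mul_cancel_left, mul_inv_cancel_left] at e2 ⊢
        rw [← mul_assoc, ← mul_assoc] at e2 ⊢
        simpa [mul_assoc] using e2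
      -- Z is nontrivial
      haveI : Nontrivial (Subgroup.center ↥V) := hV.center_nontrivial
      obtain ⟨⟨⟨z0, hz0V⟩, hz0c⟩, hz0ne⟩ := exists_ne (1 : Subgroup.center ↥V)
      have hz0Z : z0 ∈ Z := by
        refine ⟨Subgroup.mem_centralizer_iff.mpr fun h hh => ?_, hz0V⟩
        have := (Subgroup.mem_center_iff.mp hz0c) ⟨h, hh⟩
        exact congrArg Subtype.val this
      have hz0ne1 : z0 ≠ 1 := by
        intro h
        apply hz0ne
        ext
        simp [h]
      -- quotient
      haveI := hZn
      set π := QuotientGroup.mk' Z with hπdef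
      set Vb := V.map π with hVbdef
      have hVbn : Vb.Normal := hVn.map π (QuotientGroup.mk'_surjective Z)
      have hVbp : IsPGroup p Vb := hV.map π
      -- cardinality decreases
      have hlt : Nat.card Vb < n := by
        set f := π.subgroupMap V with hfdef
        have hsur : Function.Surjective f := π.subgroupMap_surjective V
        have hcard2 : Nat.card ↥V = Nat.card (↥V ⧸ f.ker) * Nat.card f.ker :=
          Subgroup.card_eq_card_quotient_mul_card_subgroup f.ker
        have hcard3 : Nat.card (↥V ⧸ f.ker) = Nat.card ↥Vb :=
          Nat.card_congr (QuotientGroup.quotientKerEquivOfSurjective f hsur).toEquiv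
        have hker : (⟨z0, hz0V⟩ : ↥V) ∈ f.ker := by
          rw [MonoidHom.mem_ker]
          exact Subtype.ext ((QuotientGroup.eq_one_iff z0).mpr hz0Z)
        haveI : Nontrivial f.ker := by
          refine ⟨⟨⟨⟨z0, hz0V⟩, hker⟩, 1, ?_⟩⟩
          intro h
          apply hz0ne1
          have h2 := Subtype.ext_iff.mp (Subtype.ext_iff.mp h)
          simpa using h2
        have h2 : 2 ≤ Nat.card f.ker := Finite.one_lt_card
        have hpos : 0 < Nat.card ↥Vb := Nat.card_pos
        calc Nat.card ↥Vb < Nat.card ↥Vb * 2 := by omega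
          _ ≤ Nat.card ↥Vb * Nat.card f.ker := Nat.mul_le_mul_left _ h2
          _ = Nat.card ↥V := by rw [hcard2, hcard3]
          _ = n := hcard
      -- apply induction hypothesis in the quotient
      obtain ⟨ub, hubV, hubeq⟩ :=
        IH (Nat.card Vb) hlt (L ⧸ Z) Vb hVbn hVbp rfl (π a) (π b)
          (Nat.Coprime.coprime_dvd_left (orderOf_map_dvd π a) ha)
          (Nat.Coprime.coprime_dvd_left (orderOf_map_dvd π b) hb)
          (by rw [← map_inv, ← map_mul]; exact Subgroup.mem_map_of_mem π hab)
      obtain ⟨u₁, hu₁V, hu₁eq⟩ := hubV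
      set a₁ := u₁ * a * u₁⁻¹ with ha₁def
      have hπa₁ : π a₁ = π b := by
        rw [ha₁def, map_mul, map_mul, map_inv, hu₁eq]
        exact hubeq
      have hmem : b⁻¹ * a₁ ∈ Z := by
        obtain ⟨ζ, hζZ, hζeq⟩ := (QuotientGroup.mk'_eq_mk' Z).mp hπa₁.symm
        have : b⁻¹ * a₁ = ζ := by rw [← hζeq]; group
        rwa [this]
      have ha₁ord : (orderOf a₁).Coprime p := by
        have := (MulAut.conj u₁).orderOf_eq a
        simp only [MulAut.conj_apply] at this
        rw [ha₁def, this]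
        exact ha
      obtain ⟨u₂, hu₂Z, hu₂eq⟩ :=
        abelianStep hp Z hZn hZcomm (hV.to_le hZle) a₁ b ha₁ord hb hmem
      refine ⟨u₂ * u₁, V.mul_mem (hZle hu₂Z) hu₁V, ?_⟩
      calc u₂ * u₁ * a * (u₂ * u₁)⁻¹ = u₂ * (u₁ * a * u₁⁻¹) * u₂⁻¹ := by group
        _ = b := by rw [← ha₁def]; exact hu₂eq

set_option maxHeartbeats 2000000 in
/-- Character formula on mixed classes: with `H = BU`, `γ = Ind_H^G(χ · Inf ψ)`,
`s v = v s`, `s ∈ B` of order prime to `p`, `v` a `p`-element, and for each `t ∈ B`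
`G`-conjugate to `s` a choice `x_t` with `x_t s x_t⁻¹ = t` and `v_t = x_t v x_t⁻¹`, one has
`γ(sv) = |B|⁻¹ ∑_{t ∈ B, t ∼_G s} ψ(t) · Ind_{C_U(t)}^{C_G(t)}(t·χ)(v_t)`.
Since this holds for an arbitrary choice function `xc`, the right-hand side is
independent of all the choices. -/
theorem stmt6 {G : Type*} [Group G] [Fintype G] (p : ℕ) (hp : p.Prime)
    (U B H : Subgroup G) (hU : IsPGroup p U) (hBnorm : B ≤ Subgroup.normalizer (U : Set G))
    (hB : (Nat.card B).Coprime p)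
    (hH : (H : Set G) = (B : Set G) * (U : Set G))
    (χ ψ inflψ : G → ℂ)
    (hχ : ∀ h ∈ H, ∀ x ∈ H, χ (x * h * x⁻¹) = χ h)
    (hψ : ∀ b ∈ B, ∀ x ∈ B, ψ (x * b * x⁻¹) = ψ b)
    (hinfl : ∀ b ∈ B, ∀ u ∈ U, inflψ (b * u) = ψ b)
    (s v : G) (hsv : s * v = v * s)
    (hs : (orderOf s).Coprime p) (hv : ∃ n : ℕ, orderOf v = p ^ n)
    (hsB : s ∈ B)
    (xc : G → G)
    (hxc : ∀ t ∈ B, (∃ g : G, g * s * g⁻¹ = t) → xc t * s * (xc t)⁻¹ = t) :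
    indRel H ⊤ (fun g => χ g * inflψ g) (s * v) =
      (Nat.card B : ℂ)⁻¹ * ∑ t : G,
        if t ∈ B ∧ ∃ g : G, g * s * g⁻¹ = t then
          ψ t * indRel (U ⊓ Subgroup.centralizer {t}) (Subgroup.centralizer {t})
            (fun g => χ (t * g)) (xc t * v * (xc t)⁻¹)
        else 0 := by
  classical
  haveI : Fact p.Prime := ⟨hp⟩
  obtain ⟨nv, hnv⟩ := hv
  -- basic facts about H = B U
  have hBleH : B ≤ H := by
    intro x hx
    have : x ∈ (H : Set G) := by
      rw [hH]
      simpa using Set.mul_mem_mul hx U.one_mem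
    exact this
  have hUleH : U ≤ H := by
    intro x hx
    have : x ∈ (H : Set G) := by
      rw [hH]
      simpa using Set.mul_mem_mul B.one_mem hx
    exact this
  have hHfact : ∀ h ∈ H, ∃ b ∈ B, ∃ u ∈ U, h = b * u := by
    intro h hh
    have : h ∈ (B : Set G) * (U : Set G) := by rw [← hH]; exact hh
    obtain ⟨b, hb, u, hu, heq⟩ := this
    exact ⟨b, hb, u, hu, heq.symm⟩
  have hHN : H ≤ (Subgroup.normalizer (U : Set G)) := by
    intro h hh
    obtain ⟨b, hb, u, hu, rfl⟩ := hHfact h hh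
    exact mul_mem (hBnorm hb) (Subgroup.le_normalizer hu)
  have hBUtriv : ∀ g, g ∈ B → g ∈ U → g = 1 := by
    intro g hgB hgU
    obtain ⟨k, hk⟩ := hU ⟨g, hgU⟩
    have hk' : g ^ p ^ k = 1 := by
      have := congrArg (Subtype.val : ↥U → G) hk
      simpa using this
    have h1 : orderOf g ∣ p ^ k := orderOf_dvd_of_pow_eq_one hk'
    have h2 : orderOf g ∣ Nat.card B := by
      have := orderOf_dvd_natCard (⟨g, hgB⟩ : ↥B)
      rwa [← Subgroup.orderOf_coe (⟨g, hgB⟩ : ↥B)] at this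
    have h3 : orderOf g ∣ 1 := by
      have := Nat.dvd_gcd h2 h1
      rwa [Nat.Coprime.gcd_eq_one (hB.pow_right k)] at this
    rw [Nat.dvd_one] at h3
    exact orderOf_eq_one_iff.mp h3
  have huniq : ∀ b ∈ B, ∀ u ∈ U, ∀ b' ∈ B, ∀ u' ∈ U, b * u = b' * u' → b = b' ∧ u = u' := by
    intro b hb u hu b' hb' u' hu' heq
    have h1 : b'⁻¹ * b = u' * u⁻¹ := by
      have h0 := congrArg (fun t => b'⁻¹ * t * u⁻¹) heq
      simpa [mul_assoc] using h0
    have h2 : b'⁻¹ * b = 1 :=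
      hBUtriv _ (B.mul_mem (B.inv_mem hb') hb) (h1 ▸ U.mul_mem hu' (U.inv_mem hu))
    constructor
    · rw [inv_mul_eq_one] at h2; exact h2.symm
    · have : u' * u⁻¹ = 1 := by rw [← h1, h2]
      rw [mul_inv_eq_one] at this; exact this.symm
  have hordB : ∀ b ∈ B, orderOf b ∣ Nat.card B := by
    intro b hb
    have := orderOf_dvd_natCard (⟨b, hb⟩ : ↥B)
    rwa [← Subgroup.orderOf_coe (⟨b, hb⟩ : ↥B)] at this
  have hcardH : Nat.card H = Nat.card B * Nat.card U := by
    have hbij : Function.Bijective (fun bu : ↥B × ↥U => (⟨(bu.1 : G) * (bu.2 : G),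
        by rw [← SetLike.mem_coe, hH]; exact Set.mul_mem_mul bu.1.2 bu.2.2⟩ : ↥H)) := by
      constructor
      · rintro ⟨b₁, u₁⟩ ⟨b₂, u₂⟩ hfeq
        have heq : (b₁ : G) * u₁ = (b₂ : G) * u₂ := congrArg Subtype.val hfeq
        obtain ⟨he1, he2⟩ := huniq _ b₁.2 _ u₁.2 _ b₂.2 _ u₂.2 heq
        exact Prod.ext (Subtype.ext he1) (Subtype.ext he2)
      · rintro ⟨h, hh⟩
        obtain ⟨b, hb, u, hu, heq⟩ := hHfact h hh
        exact ⟨(⟨b, hb⟩, ⟨u, hu⟩), Subtype.ext heq.symm⟩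
    calc Nat.card ↥H = Nat.card (↥B × ↥U) := (Nat.card_eq_of_bijective _ hbij).symm
      _ = Nat.card ↥B * Nat.card ↥U := Nat.card_prod _ _
  -- Fact A
  have hordconj : ∀ (g t : G), orderOf (g * t * g⁻¹) = orderOf t := by
    intro g t
    have := (MulAut.conj g).orderOf_eq t
    simpa [MulAut.conj_apply] using this
  have hFactA : ∀ x : G, x * (s * v) * x⁻¹ ∈ H → x * s * x⁻¹ ∈ H ∧ x * v * x⁻¹ ∈ U := by
    intro x hxH
    set a := x * s * x⁻¹ with hadef
    set w := x * v * x⁻¹ with hwdef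
    have haw : a * w = x * (s * v) * x⁻¹ := by rw [hadef, hwdef]; group
    have hcomm : Commute a w := by
      show a * w = w * a
      rw [hadef, hwdef]
      have h1 : x * s * x⁻¹ * (x * v * x⁻¹) = x * (s * v) * x⁻¹ := by group
      have h2 : x * v * x⁻¹ * (x * s * x⁻¹) = x * (v * s) * x⁻¹ := by group
      rw [h1, h2, hsv]
    have horda : orderOf a = orderOf s := hordconj x s
    have hordw : orderOf w = p ^ nv := by rw [hwdef, hordconj, hnv]
    have hcop : Nat.Coprime (orderOf a) (orderOf w) := by
      rw [horda, hordw]; exact hs.pow_right nv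
    obtain ⟨k, hk1, hk2⟩ := Nat.chineseRemainder hcop 1 0
    have hak : a ^ k = a := by
      have h0 : a ^ k = a ^ 1 := pow_eq_pow_iff_modEq.mpr hk1
      rwa [pow_one] at h0
    have hwk : w ^ k = 1 := by
      have h0 : w ^ k = w ^ 0 := pow_eq_pow_iff_modEq.mpr hk2
      rwa [pow_zero] at h0
    have hawk : (a * w) ^ k = a := by rw [hcomm.mul_pow, hak, hwk, mul_one]
    have hawH : a * w ∈ H := by rw [haw]; exact hxH
    have haH : a ∈ H := by rw [← hawk]; exact H.pow_mem hawH k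
    have hwH : w ∈ H := by
      have h3 : w = a⁻¹ * (a * w) := by group
      rw [h3]; exact H.mul_mem (H.inv_mem haH) hawH
    refine ⟨haH, ?_⟩
    -- w is a p-element of H, hence lies in U
    obtain ⟨b₁, hb₁, u₁, hu₁, hwbu⟩ := hHfact w hwH
    set π := QuotientGroup.mk' (U.subgroupOf (Subgroup.normalizer (U : Set G))) with hπdef
    have hπw : π ⟨w, hHN hwH⟩ = π ⟨b₁, hBnorm hb₁⟩ := by
      have he : (⟨w, hHN hwH⟩ : ↥(Subgroup.normalizer (U : Set G))) =
          ⟨b₁, hBnorm hb₁⟩ * ⟨u₁, Subgroup.le_normalizer hu₁⟩ := Subtype.ext hwbu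
      rw [he, map_mul]
      have hu1 : π ⟨u₁, Subgroup.le_normalizer hu₁⟩ = 1 :=
        (QuotientGroup.eq_one_iff _).mpr (by simpa [Subgroup.mem_subgroupOf] using hu₁)
      rw [hu1, mul_one]
    have h1 : orderOf (π ⟨w, hHN hwH⟩) ∣ p ^ nv := by
      refine dvd_trans (orderOf_map_dvd π _) ?_
      rw [Subgroup.orderOf_mk, hordw]
    have h2 : orderOf (π ⟨w, hHN hwH⟩) ∣ Nat.card B := by
      rw [hπw]
      refine dvd_trans (orderOf_map_dvd π _) ?_
      rw [Subgroup.orderOf_mk]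
      exact hordB b₁ hb₁
    have h3 : orderOf (π ⟨w, hHN hwH⟩) ∣ 1 := by
      have := Nat.dvd_gcd h2 h1
      rwa [Nat.Coprime.gcd_eq_one (hB.pow_right nv)] at this
    rw [Nat.dvd_one] at h3
    have h4 : π ⟨w, hHN hwH⟩ = 1 := orderOf_eq_one_iff.mp h3
    have h5 : (⟨w, hHN hwH⟩ : ↥(Subgroup.normalizer (U : Set G))) ∈ U.subgroupOf (Subgroup.normalizer (U : Set G)) :=
      (QuotientGroup.eq_one_iff _).mp h4
    simpa [Subgroup.mem_subgroupOf] using h5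
  -- Fact C (conjugating the p'-part into B by an element of U)
  have hconj : ∀ a' ∈ H, (orderOf a').Coprime p → ∀ b' ∈ B, b'⁻¹ * a' ∈ U →
      ∃ u ∈ U, u * a' * u⁻¹ = b' := by
    intro a' ha'H ha'cop b' hb' hmemU
    have hVn : (U.subgroupOf (Subgroup.normalizer (U : Set G))).Normal := Subgroup.normal_in_normalizer
    have hVp : IsPGroup p (U.subgroupOf (Subgroup.normalizer (U : Set G))) :=
      hU.of_equiv (Subgroup.subgroupOfEquivOfLe Subgroup.le_normalizer).symm
    obtain ⟨u9, hu9V, hu9eq⟩ := factC hp (Nat.card (U.subgroupOf (Subgroup.normalizer (U : Set G))))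
      ↥(Subgroup.normalizer (U : Set G)) (U.subgroupOf (Subgroup.normalizer (U : Set G))) hVn hVp rfl
      ⟨a', hHN ha'H⟩ ⟨b', hBnorm hb'⟩
      (by rw [Subgroup.orderOf_mk]; exact ha'cop)
      (by rw [Subgroup.orderOf_mk]
          exact Nat.Coprime.coprime_dvd_left (hordB b' hb') hB)
      (by rw [Subgroup.mem_subgroupOf]; exact hmemU)
    refine ⟨(u9 : G), Subgroup.mem_subgroupOf.mp hu9V, ?_⟩
    exact congrArg Subtype.val hu9eq
  -- conjugation invariance of the centralizer cardinality
  have hccard : ∀ g ∈ (Subgroup.normalizer (U : Set G)), ∀ t : G,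
      Nat.card ↥(U ⊓ Subgroup.centralizer {g * t * g⁻¹}) =
      Nat.card ↥(U ⊓ Subgroup.centralizer {t}) := by
    have key : ∀ g' ∈ (Subgroup.normalizer (U : Set G)), ∀ t' c : G, c ∈ U ⊓ Subgroup.centralizer {t'} →
        g' * c * g'⁻¹ ∈ U ⊓ Subgroup.centralizer {g' * t' * g'⁻¹} := by
      intro g' hg' t' c hc
      obtain ⟨hc1, hc2⟩ := Subgroup.mem_inf.mp hc
      refine Subgroup.mem_inf.mpr ⟨(Subgroup.mem_normalizer_iff.mp hg' c).mp hc1, ?_⟩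
      rw [Subgroup.mem_centralizer_singleton_iff]
      have hc3 := Subgroup.mem_centralizer_singleton_iff.mp hc2
      calc g' * c * g'⁻¹ * (g' * t' * g'⁻¹) = g' * (c * t') * g'⁻¹ := by group
        _ = g' * (t' * c) * g'⁻¹ := by rw [hc3]
        _ = g' * t' * g'⁻¹ * (g' * c * g'⁻¹) := by group
    intro g hg t
    have key2 : ∀ d : G, d ∈ U ⊓ Subgroup.centralizer {g * t * g⁻¹} →
        g⁻¹ * d * g ∈ U ⊓ Subgroup.centralizer {t} := by
      intro d hd
      have h0 := key g⁻¹ ((Subgroup.normalizer (U : Set G)).inv_mem hg) (g * t * g⁻¹) d hd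
      rw [show g⁻¹ * (g * t * g⁻¹) * g⁻¹⁻¹ = t by group] at h0
      rw [show g⁻¹ * d * g⁻¹⁻¹ = g⁻¹ * d * g by group] at h0
      exact h0
    refine (Nat.card_congr ⟨fun c => ⟨g * (c : G) * g⁻¹, key g hg t _ c.2⟩,
      fun d => ⟨g⁻¹ * (d : G) * g, key2 _ d.2⟩, fun c => Subtype.ext ?_,
      fun d => Subtype.ext ?_⟩).symm
    · show g⁻¹ * (g * (c : G) * g⁻¹) * g = (c : G)
      group
    · show g * (g⁻¹ * (d : G) * g) * g⁻¹ = (d : G)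
      group
  -- the two class functions
  set E : G → ℂ := fun x => if x * (s * v) * x⁻¹ ∈ H
    then χ (x * (s * v) * x⁻¹) * inflψ (x * (s * v) * x⁻¹) else 0 with hEdef
  set F : G → ℂ := fun z => if z * s * z⁻¹ ∈ B ∧ z * v * z⁻¹ ∈ U
    then ψ (z * s * z⁻¹) *
      ((Nat.card ↥(U ⊓ Subgroup.centralizer {z * s * z⁻¹}) : ℂ))⁻¹ *
      χ (z * (s * v) * z⁻¹) else 0 with hFdef
  -- main pointwise counting identity
  have hmain : ∀ x : G, (∑ h : G, if h ∈ H then F (h * x) else 0) = (Nat.card B : ℂ) * E x := by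
    intro x
    by_cases hxH : x * (s * v) * x⁻¹ ∈ H
    · -- main case
      set a := x * s * x⁻¹ with hadef
      set w := x * v * x⁻¹ with hwdef
      set cc := x * (s * v) * x⁻¹ with hccdef
      obtain ⟨haH, hwU⟩ := hFactA x hxH
      obtain ⟨b', hb', u₀, hu₀, habu⟩ := hHfact a haH
      have hacop : (orderOf a).Coprime p := by rw [hadef, hordconj]; exact hs
      have hb'a : b'⁻¹ * a ∈ U := by
        rw [habu, ← mul_assoc, inv_mul_cancel, one_mul]; exact hu₀
      obtain ⟨ustar, hustar, hustar_eq⟩ := hconj a haH hacop b' hb' hb'a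
      set m := Nat.card ↥(U ⊓ Subgroup.centralizer {a}) with hmdef
      have hm0 : (m : ℂ) ≠ 0 := Nat.cast_ne_zero.mpr Nat.card_pos.ne'
      have hsolve : ∀ u ∈ U, u * a * u⁻¹ ∈ B → u * a * u⁻¹ = b' := by
        intro u hu huB
        have h1 : u * a * u⁻¹ = b' * (b'⁻¹ * u * b' * u₀ * u⁻¹) := by rw [habu]; group
        have h2 : b'⁻¹ * u * b' * u₀ * u⁻¹ ∈ U := by
          refine U.mul_mem (U.mul_mem ?_ hu₀) (U.inv_mem hu)
          have h0 := (Subgroup.mem_normalizer_iff.mp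
            ((Subgroup.normalizer (U : Set G)).inv_mem (hBnorm hb')) u).mp hu
          simpa using h0
        have h3 : b'⁻¹ * u * b' * u₀ * u⁻¹ ∈ B := by
          have he : b'⁻¹ * u * b' * u₀ * u⁻¹ = b'⁻¹ * (u * a * u⁻¹) := by rw [habu]; group
          rw [he]; exact B.mul_mem (B.inv_mem hb') huB
        have h4 : b'⁻¹ * u * b' * u₀ * u⁻¹ = 1 := hBUtriv _ h3 h2
        rw [h1, h4, mul_one]
      have hterm : ∀ h ∈ H, h * a * h⁻¹ ∈ B → ψ (h * a * h⁻¹) = ψ b' ∧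
          Nat.card ↥(U ⊓ Subgroup.centralizer {h * a * h⁻¹}) = m := by
        intro h hh hB'
        obtain ⟨b, hb, u, hu, hheq⟩ := hHfact h hh
        have huaB : u * a * u⁻¹ ∈ B := by
          have he : u * a * u⁻¹ = b⁻¹ * (h * a * h⁻¹) * b := by rw [hheq]; group
          rw [he]; exact B.mul_mem (B.mul_mem (B.inv_mem hb) hB') hb
        have hua : u * a * u⁻¹ = b' := hsolve u hu huaB
        have hhab : h * a * h⁻¹ = b * b' * b⁻¹ := by
          rw [hheq, ← hua]; group
        constructor
        · rw [hhab]; exact hψ b' hb' b hb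
        · rw [hhab]
          have e1 := hccard b (hBnorm hb) b'
          have e2 := hccard ustar (Subgroup.le_normalizer hustar) a
          rw [hustar_eq] at e2
          rw [e1, hmdef]
          exact e2
      -- count the solution set
      have hcount : (Finset.univ.filter (fun h : G => h ∈ H ∧ h * a * h⁻¹ ∈ B)).card
          = Nat.card B * m := by
        have hbij : Function.Bijective
            (fun bc : ↥B × ↥(U ⊓ Subgroup.centralizer {a}) =>
              (⟨(bc.1 : G) * (ustar * (bc.2 : G)), by
                  rw [← SetLike.mem_coe, hH]
                  exact Set.mul_mem_mul bc.1.2 (U.mul_mem hustar bc.2.2.1), by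
                  have hca : (bc.2 : G) * a * (bc.2 : G)⁻¹ = a := by
                    have h0 := Subgroup.mem_centralizer_singleton_iff.mp bc.2.2.2
                    rw [h0]; group
                  have he : (bc.1 : G) * (ustar * (bc.2 : G)) * a *
                      ((bc.1 : G) * (ustar * (bc.2 : G)))⁻¹ =
                      (bc.1 : G) * (ustar * ((bc.2 : G) * a * (bc.2 : G)⁻¹) * ustar⁻¹) *
                      (bc.1 : G)⁻¹ := by group
                  rw [he, hca, hustar_eq]
                  exact B.mul_mem (B.mul_mem bc.1.2 hb') (B.inv_mem bc.1.2)⟩ :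
                {h : G // h ∈ H ∧ h * a * h⁻¹ ∈ B})) := by
          constructor
          · rintro ⟨b₁, c₁⟩ ⟨b₂, c₂⟩ hfeq
            have heq : (b₁ : G) * (ustar * (c₁ : G)) = (b₂ : G) * (ustar * (c₂ : G)) :=
              congrArg Subtype.val hfeq
            obtain ⟨he1, he2⟩ := huniq _ b₁.2 _ (U.mul_mem hustar c₁.2.1) _ b₂.2 _
              (U.mul_mem hustar c₂.2.1) heq
            refine Prod.ext (Subtype.ext he1) (Subtype.ext ?_)
            exact mul_left_cancel he2
          · rintro ⟨h, hhH, hhB⟩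
            obtain ⟨b, hb, u, hu, hheq⟩ := hHfact h hhH
            have huaB : u * a * u⁻¹ ∈ B := by
              have he : u * a * u⁻¹ = b⁻¹ * (h * a * h⁻¹) * b := by rw [hheq]; group
              rw [he]; exact B.mul_mem (B.mul_mem (B.inv_mem hb) hhB) hb
            have hua : u * a * u⁻¹ = b' := hsolve u hu huaB
            have hcmem : ustar⁻¹ * u ∈ U ⊓ Subgroup.centralizer {a} := by
              refine Subgroup.mem_inf.mpr ⟨U.mul_mem (U.inv_mem hustar) hu, ?_⟩
              rw [Subgroup.mem_centralizer_singleton_iff]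
              have ha' : ustar⁻¹ * b' * ustar = a := by rw [← hustar_eq]; group
              calc ustar⁻¹ * u * a = ustar⁻¹ * (u * a * u⁻¹) * u := by group
                _ = ustar⁻¹ * b' * u := by rw [hua]
                _ = (ustar⁻¹ * b' * ustar) * (ustar⁻¹ * u) := by group
                _ = a * (ustar⁻¹ * u) := by rw [ha']
            refine ⟨(⟨b, hb⟩, ⟨ustar⁻¹ * u, hcmem⟩), Subtype.ext ?_⟩
            show b * (ustar * (ustar⁻¹ * u)) = h
            rw [hheq]; group
        calc (Finset.univ.filter (fun h : G => h ∈ H ∧ h * a * h⁻¹ ∈ B)).card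
            = Fintype.card {h : G // h ∈ H ∧ h * a * h⁻¹ ∈ B} := (Fintype.card_subtype _).symm
          _ = Nat.card {h : G // h ∈ H ∧ h * a * h⁻¹ ∈ B} := (Nat.card_eq_fintype_card).symm
          _ = Nat.card (↥B × ↥(U ⊓ Subgroup.centralizer {a})) :=
              (Nat.card_eq_of_bijective _ hbij).symm
          _ = Nat.card B * m := by rw [Nat.card_prod, hmdef]
      -- evaluate the sum
      have hw' : ∀ h ∈ H, h * w * h⁻¹ ∈ U := fun h hh =>
        (Subgroup.mem_normalizer_iff.mp (hHN hh) w).mp hwU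
      have hsum : (∑ h : G, if h ∈ H then F (h * x) else 0) =
          ∑ h : G, if h ∈ H ∧ h * a * h⁻¹ ∈ B
            then ψ b' * ((m : ℂ))⁻¹ * χ cc else 0 := by
        refine Finset.sum_congr rfl fun h _ => ?_
        by_cases hh : h ∈ H
        · rw [if_pos hh]
          have e1 : (h * x) * s * (h * x)⁻¹ = h * a * h⁻¹ := by rw [hadef]; group
          have e2 : (h * x) * v * (h * x)⁻¹ = h * w * h⁻¹ := by rw [hwdef]; group
          have e3 : (h * x) * (s * v) * (h * x)⁻¹ = h * cc * h⁻¹ := by rw [hccdef]; group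
          rw [hFdef]
          simp only [e1, e2, e3]
          by_cases hPB : h * a * h⁻¹ ∈ B
          · rw [if_pos ⟨hPB, hw' h hh⟩, if_pos ⟨hh, hPB⟩]
            obtain ⟨hψeq, hcardeq⟩ := hterm h hh hPB
            rw [hψeq, hcardeq, hχ cc hxH h hh]
          · rw [if_neg (fun hcon => hPB hcon.1), if_neg (fun hcon => hPB hcon.2)]
        · rw [if_neg hh, if_neg (fun hcon => hh hcon.1)]
      rw [hsum, ← Finset.sum_filter]
      simp only [Finset.sum_const, hcount, nsmul_eq_mul]
      have hEx : E x = χ cc * ψ b' := by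
        rw [hEdef]
        simp only
        rw [if_pos hxH]
        have hccw : cc = b' * (u₀ * w) := by
          rw [hccdef, hwdef, hadef] at *
          rw [show x * (s * v) * x⁻¹ = (x * s * x⁻¹) * (x * v * x⁻¹) by group, habu]
          group
        rw [← hccdef, hccw, hinfl b' hb' (u₀ * w) (U.mul_mem hu₀ hwU)]
      rw [hEx, Nat.cast_mul]
      field_simp
    · -- degenerate case
      have hE : E x = 0 := if_neg hxH
      rw [hE, mul_zero]
      refine Finset.sum_eq_zero fun h _ => ?_
      by_cases hh : h ∈ H
      · rw [if_pos hh, hFdef]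
        simp only
        rw [if_neg]
        rintro ⟨hc1, hc2⟩
        apply hxH
        have key : x * (s * v) * x⁻¹ =
            h⁻¹ * ((h * x) * s * (h * x)⁻¹ * ((h * x) * v * (h * x)⁻¹)) * h := by group
        rw [key]
        exact H.mul_mem (H.mul_mem (H.inv_mem hh)
          (H.mul_mem (hBleH hc1) (hUleH hc2))) hh
      · rw [if_neg hh]
  -- global identity
  have hglobal : (Nat.card H : ℂ) * (∑ z : G, F z) = (Nat.card B : ℂ) * (∑ x : G, E x) := by
    have hcardfilter : (Finset.univ.filter (fun h : G => h ∈ H)).card = Nat.card H := by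
      rw [Nat.card_eq_fintype_card]
      exact (Fintype.card_subtype _).symm
    have hconst : (∑ h : G, if h ∈ H then (∑ z : G, F z) else 0)
        = (Nat.card H : ℂ) * (∑ z : G, F z) := by
      have h1 : (∑ h : G, if h ∈ H then (∑ z : G, F z) else 0) =
          ∑ _h ∈ Finset.univ.filter (fun h : G => h ∈ H), (∑ z : G, F z) :=
        (Finset.sum_filter _ _).symm
      rw [h1, Finset.sum_const, hcardfilter, nsmul_eq_mul]
    calc (Nat.card H : ℂ) * (∑ z : G, F z)
        = ∑ h : G, (if h ∈ H then (∑ z : G, F z) else 0) := hconst.symm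
      _ = ∑ h : G, (if h ∈ H then (∑ z : G, F (h * z)) else 0) := by
          refine Finset.sum_congr rfl fun h _ => ?_
          by_cases hh : h ∈ H
          · rw [if_pos hh, if_pos hh]
            exact (Fintype.sum_equiv (Equiv.mulLeft h) _ _ (fun z => rfl)).symm
          · rw [if_neg hh, if_neg hh]
      _ = ∑ h : G, ∑ z : G, (if h ∈ H then F (h * z) else 0) := by
          refine Finset.sum_congr rfl fun h _ => ?_
          by_cases hh : h ∈ H
          · simp only [if_pos hh]
          · simp only [if_neg hh, Finset.sum_const_zero]
      _ = ∑ z : G, ∑ h : G, (if h ∈ H then F (h * z) else 0) := Finset.sum_comm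
      _ = ∑ z : G, (Nat.card B : ℂ) * E z := Finset.sum_congr rfl fun z _ => hmain z
      _ = (Nat.card B : ℂ) * (∑ x : G, E x) := by rw [Finset.mul_sum]
  -- rewrite of the RHS
  have hRHS : (∑ t : G, if t ∈ B ∧ ∃ g : G, g * s * g⁻¹ = t then
          ψ t * indRel (U ⊓ Subgroup.centralizer {t}) (Subgroup.centralizer {t})
            (fun g => χ (t * g)) (xc t * v * (xc t)⁻¹)
        else 0) = ∑ z : G, F z := by
    have hinner : ∀ t : G, t ∈ B → (∃ g : G, g * s * g⁻¹ = t) →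
        (∑ y : G, if y ∈ Subgroup.centralizer {t} ∧
            y * (xc t * v * (xc t)⁻¹) * y⁻¹ ∈ U ⊓ Subgroup.centralizer {t}
          then χ (t * (y * (xc t * v * (xc t)⁻¹) * y⁻¹)) else 0)
        = ∑ z : G, if z * s * z⁻¹ = t ∧ z * v * z⁻¹ ∈ U
            then χ (z * (s * v) * z⁻¹) else 0 := by
      intro t htB htconj
      set y := xc t with hydef
      have hxct : y * s * y⁻¹ = t := hxc t htB htconj
      have hs' : y⁻¹ * t * y = s := by rw [← hxct]; group
      rw [← Fintype.sum_equiv (Equiv.mulRight y⁻¹)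
        (fun z => if (z * y⁻¹) ∈ Subgroup.centralizer {t} ∧
            (z * y⁻¹) * (y * v * y⁻¹) * (z * y⁻¹)⁻¹ ∈
              U ⊓ Subgroup.centralizer {t}
          then χ (t * ((z * y⁻¹) * (y * v * y⁻¹) * (z * y⁻¹)⁻¹)) else 0)
        _ (fun z => rfl)]
      refine Finset.sum_congr rfl fun z _ => ?_
      have hyv : (z * y⁻¹) * (y * v * y⁻¹) * (z * y⁻¹)⁻¹
          = z * v * z⁻¹ := by group
      have hcond1 : ((z * y⁻¹) ∈ Subgroup.centralizer {t}) ↔ z * s * z⁻¹ = t := by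
        rw [Subgroup.mem_centralizer_singleton_iff]
        constructor
        · intro h
          calc z * s * z⁻¹ = z * (y⁻¹ * t * y) * z⁻¹ := by rw [hs']
            _ = (z * y⁻¹ * t) * (y * z⁻¹) := by group
            _ = (t * (z * y⁻¹)) * (y * z⁻¹) := by rw [h]
            _ = t := by group
        · intro h
          have h2 : z * s = t * z := by rw [← h]; group
          calc z * y⁻¹ * t = z * (y⁻¹ * t * y) * y⁻¹ := by group
            _ = z * s * y⁻¹ := by rw [hs']
            _ = t * z * y⁻¹ := by rw [h2]
            _ = t * (z * y⁻¹) := by group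
      rw [hyv]
      by_cases h1 : z * s * z⁻¹ = t
      · have hcent : z * v * z⁻¹ ∈ Subgroup.centralizer {t} := by
          rw [Subgroup.mem_centralizer_singleton_iff]
          calc z * v * z⁻¹ * t = z * v * z⁻¹ * (z * s * z⁻¹) := by rw [h1]
            _ = z * (v * s) * z⁻¹ := by group
            _ = z * (s * v) * z⁻¹ := by rw [hsv]
            _ = (z * s * z⁻¹) * (z * v * z⁻¹) := by group
            _ = t * (z * v * z⁻¹) := by rw [h1]
        have hval : t * (z * v * z⁻¹) = z * (s * v) * z⁻¹ := by
          rw [← h1]; group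
        by_cases h2 : z * v * z⁻¹ ∈ U
        · rw [if_pos ⟨hcond1.mpr h1, Subgroup.mem_inf.mpr ⟨h2, hcent⟩⟩, if_pos ⟨h1, h2⟩, hval]
        · rw [if_neg, if_neg (fun hc => h2 hc.2)]
          rintro ⟨_, hc2⟩
          exact h2 (Subgroup.mem_inf.mp hc2).1
      · rw [if_neg (fun hc => h1 (hcond1.mp hc.1)), if_neg (fun hc => h1 hc.1)]
    calc (∑ t : G, if t ∈ B ∧ ∃ g : G, g * s * g⁻¹ = t then
          ψ t * indRel (U ⊓ Subgroup.centralizer {t}) (Subgroup.centralizer {t})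
            (fun g => χ (t * g)) (xc t * v * (xc t)⁻¹)
        else 0)
        = ∑ t : G, ∑ z : G, (if z * s * z⁻¹ = t ∧ t ∈ B ∧ z * v * z⁻¹ ∈ U then
            ψ t * ((Nat.card ↥(U ⊓ Subgroup.centralizer {t}) : ℂ))⁻¹ *
              χ (z * (s * v) * z⁻¹) else 0) := by
          refine Finset.sum_congr rfl fun t _ => ?_
          by_cases ht : t ∈ B ∧ ∃ g : G, g * s * g⁻¹ = t
          · rw [if_pos ht]
            show ψ t * (((Nat.card ↥(U ⊓ Subgroup.centralizer {t}) : ℂ))⁻¹ *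
              (∑ y : G, if y ∈ Subgroup.centralizer {t} ∧
                  y * (xc t * v * (xc t)⁻¹) * y⁻¹ ∈ U ⊓ Subgroup.centralizer {t}
                then χ (t * (y * (xc t * v * (xc t)⁻¹) * y⁻¹)) else 0)) = _
            rw [hinner t ht.1 ht.2, ← mul_assoc, Finset.mul_sum]
            refine Finset.sum_congr rfl fun z _ => ?_
            simp only [mul_ite, mul_zero]
            by_cases hz : z * s * z⁻¹ = t ∧ z * v * z⁻¹ ∈ U
            · rw [if_pos hz, if_pos ⟨hz.1, ht.1, hz.2⟩]
            · rw [if_neg hz, if_neg (fun hc => hz ⟨hc.1, hc.2.2⟩)]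
          · rw [if_neg ht]
            refine (Finset.sum_eq_zero fun z _ => ?_).symm
            rw [if_neg]
            rintro ⟨hz1, hz2, hz3⟩
            exact ht ⟨hz2, z, hz1⟩
      _ = ∑ z : G, ∑ t : G, (if z * s * z⁻¹ = t ∧ t ∈ B ∧ z * v * z⁻¹ ∈ U then
            ψ t * ((Nat.card ↥(U ⊓ Subgroup.centralizer {t}) : ℂ))⁻¹ *
              χ (z * (s * v) * z⁻¹) else 0) := Finset.sum_comm
      _ = ∑ z : G, F z := by
          refine Finset.sum_congr rfl fun z _ => ?_
          rw [Finset.sum_eq_single_of_mem (z * s * z⁻¹) (Finset.mem_univ _)]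
          · rw [hFdef]
            simp only
            by_cases hz : z * s * z⁻¹ ∈ B ∧ z * v * z⁻¹ ∈ U
            · rw [if_pos ⟨trivial, hz.1, hz.2⟩, if_pos hz]
            · rw [if_neg (fun hc => hz ⟨hc.2.1, hc.2.2⟩), if_neg hz]
          · intro t _ hne
            rw [if_neg (fun hc => hne hc.1.symm)]
  -- conclusion
  rw [hRHS]
  show (Nat.card H : ℂ)⁻¹ * (∑ x : G, if x ∈ (⊤ : Subgroup G) ∧ x * (s * v) * x⁻¹ ∈ H
      then χ (x * (s * v) * x⁻¹) * inflψ (x * (s * v) * x⁻¹) else 0)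
    = (Nat.card B : ℂ)⁻¹ * ∑ z : G, F z
  have hsum1 : (∑ x : G, if x ∈ (⊤ : Subgroup G) ∧ x * (s * v) * x⁻¹ ∈ H
      then χ (x * (s * v) * x⁻¹) * inflψ (x * (s * v) * x⁻¹) else 0) = ∑ x : G, E x := by
    refine Finset.sum_congr rfl fun x _ => ?_
    simp [hEdef]
  rw [hsum1]
  have hH0 : (Nat.card H : ℂ) ≠ 0 := Nat.cast_ne_zero.mpr Nat.card_pos.ne'
  have hB0 : (Nat.card B : ℂ) ≠ 0 := Nat.cast_ne_zero.mpr Nat.card_pos.ne'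
  rw [inv_mul_eq_div, inv_mul_eq_div, div_eq_div_iff hH0 hB0]
  linear_combination -hglobal
end

section
/- Let K be a field, L a finite-dimensional Lie algebra over K, and H ≤ L a Cartan subalgebra such that L decomposes as the direct sum of its weight spaces for the adjoint action of H, with zero weight space equal to H: L = H ⊕ ⊕_{α∈Φ} L_α, where Φ is the set of nonzero roots. Let Ψ ⊆ Φ be closed and symmetric, i.e., −Ψ = Ψ and whenever α, β ∈ Ψ with α+β ∈ Φ one has α+β ∈ Ψ. Set h = H ⊕ ⊕_{α∈Ψ} L_α and n = ⊕_{α∈Φ∖Ψ} L_α. Then L = h ⊕ n as K-vector spaces, ⁅n, h⁆ ⊆ n, and for every element e ∈ h the subspace ⁅L,e⁆ = {⁅x,e⁆ : x ∈ L} decomposes as the internal direct sum ⁅L,e⁆ = ⁅h,e⁆ ⊕ ⁅n,e⁆. -/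
open DFinsupp in
lemma aux_biSup_disjoint {R N ι : Type*} [Ring R] [AddCommGroup N] [Module R N]
    [DecidableEq ι] {p : ι → Submodule R N} (hp : iSupIndep p) {S T : Set ι}
    (hST : Disjoint S T) :
    Disjoint (⨆ i ∈ S, p i) (⨆ i ∈ T, p i) := by
  classical
  rw [Submodule.disjoint_def]
  intro x hxS hxT
  rw [Submodule.mem_biSup_iff_exists_dfinsupp] at hxS hxT
  obtain ⟨f, hf⟩ := hxS
  obtain ⟨g, hg⟩ := hxT
  have hfg := hp.dfinsupp_lsum_injective (hf.trans hg.symm)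
  have hz : f.filter (· ∈ S) = 0 := by
    ext i
    by_cases hiS : i ∈ S
    · have hiT : i ∉ T := Set.disjoint_left.mp hST hiS
      have h1 := congrFun (congrArg DFunLike.coe hfg) i
      rw [DFinsupp.filter_apply, DFinsupp.filter_apply] at h1
      simp only [hiS, hiT, if_true, if_false] at h1
      simp [DFinsupp.filter_apply, hiS, h1]
    · simp [DFinsupp.filter_apply, hiS]
  rw [hz, map_zero] at hf
  exact hf.symm

/-- Let `L` be a finite-dimensional Lie algebra over a field `K` with Cartan subalgebra
`H`, decomposing as the direct sum of its (generalised) weight spaces for the adjoint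
action of `H`, with zero weight space `H`:  `L = H ⊕ ⨁_{α ∈ Φ} L_α`, where
`⁅L_α, L_β⁆ ⊆ L_{α+β}` (interpreted as `0` when `α+β` is neither `0` nor a root).
If `Ψ ⊆ Φ` is closed and symmetric, `h = H ⊕ ⨁_{α ∈ Ψ} L_α` and
`n = ⨁_{α ∈ Φ∖Ψ} L_α`, then `L = h ⊕ n` as vector spaces, `⁅n, h⁆ ⊆ n`, and for every
`e ∈ h` one has `⁅L,e⁆ = ⁅h,e⁆ ⊕ ⁅n,e⁆` (an internal direct sum). -/
theorem stmt11 {K : Type*} [Field K] {L : Type*} [LieRing L] [LieAlgebra K L]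
    [FiniteDimensional K L]
    (H : LieSubalgebra K L) (hH : H.IsCartanSubalgebra)
    (Φ : Set (Module.Dual K H))
    (Lsp : Module.Dual K H → Submodule K L)
    (hΦ0 : (0 : Module.Dual K H) ∉ Φ)
    (hΦne : ∀ α ∈ Φ, Lsp α ≠ ⊥)
    (hL0 : Lsp 0 = H.toSubmodule)
    (hLbot : ∀ γ : Module.Dual K H, γ ≠ 0 → γ ∉ Φ → Lsp γ = ⊥)
    (hwt : ∀ (γ : Module.Dual K H), ∀ x ∈ Lsp γ, ∀ h : H,
      ∃ n : ℕ, (((LieAlgebra.ad K L (h : L)) - γ h • (1 : Module.End K L)) ^ n) x = 0)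
    (hspan : H.toSubmodule ⊔ (⨆ α ∈ Φ, Lsp α) = ⊤)
    (hindep : ∀ γ : Module.Dual K H,
      Disjoint (Lsp γ) (⨆ (δ : Module.Dual K H) (_ : δ ≠ γ), Lsp δ))
    (hbrk : ∀ (α β : Module.Dual K H) (x y : L),
      x ∈ Lsp α → y ∈ Lsp β → ⁅x, y⁆ ∈ Lsp (α + β))
    (Ψ : Set (Module.Dual K H)) (hΨΦ : Ψ ⊆ Φ)
    (hsym : ∀ α ∈ Ψ, -α ∈ Ψ)
    (hclosed : ∀ α ∈ Ψ, ∀ β ∈ Ψ, α + β ∈ Φ → α + β ∈ Ψ) :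
    ∀ hsub nsub : Submodule K L,
      hsub = H.toSubmodule ⊔ ⨆ α ∈ Ψ, Lsp α →
      nsub = ⨆ α ∈ Φ \ Ψ, Lsp α →
      hsub ⊓ nsub = ⊥ ∧ hsub ⊔ nsub = ⊤ ∧
      (∀ x ∈ nsub, ∀ y ∈ hsub, ⁅x, y⁆ ∈ nsub) ∧
      ∀ e ∈ hsub,
        Submodule.map (-(LieAlgebra.ad K L e) : L →ₗ[K] L) ⊤ =
          Submodule.map (-(LieAlgebra.ad K L e) : L →ₗ[K] L) hsub ⊔
            Submodule.map (-(LieAlgebra.ad K L e) : L →ₗ[K] L) nsub ∧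
        Disjoint (Submodule.map (-(LieAlgebra.ad K L e) : L →ₗ[K] L) hsub)
          (Submodule.map (-(LieAlgebra.ad K L e) : L →ₗ[K] L) nsub) := by
  classical
  intro hsub nsub hh hn
  have hhs : hsub = ⨆ γ ∈ insert (0 : Module.Dual K H) Ψ, Lsp γ := by
    rw [hh, iSup_insert, hL0]
  have hindep' : iSupIndep Lsp := hindep
  have hdisjsets : Disjoint (insert (0 : Module.Dual K H) Ψ) (Φ \ Ψ) := by
    rw [Set.disjoint_left]
    rintro γ (rfl | hγ) hγ'
    · exact hΦ0 hγ'.1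
    · exact hγ'.2 hγ
  have hdisj : Disjoint hsub nsub := by
    rw [hhs, hn]; exact aux_biSup_disjoint hindep' hdisjsets
  have hsup : hsub ⊔ nsub = ⊤ := by
    rw [hh, hn, sup_assoc, ← iSup_union, Set.union_diff_cancel hΨΦ, hspan]
  -- general bracket induction lemma
  have key : ∀ (S T : Set (Module.Dual K H)) (C : Submodule K L),
      (∀ α ∈ S, ∀ β ∈ T, ∀ x ∈ Lsp α, ∀ y ∈ Lsp β, ⁅x, y⁆ ∈ C) →
      ∀ x ∈ ⨆ α ∈ S, Lsp α, ∀ y ∈ ⨆ β ∈ T, Lsp β, ⁅x, y⁆ ∈ C := by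
    intro S T C hC x hx
    rw [iSup_subtype'] at hx
    refine Submodule.iSup_induction _
      (motive := fun x => ∀ y ∈ ⨆ β ∈ T, Lsp β, ⁅x, y⁆ ∈ C) hx ?_ ?_ ?_
    · rintro ⟨α, hα⟩ x hxα y hy
      rw [iSup_subtype'] at hy
      refine Submodule.iSup_induction _ (motive := fun y => ⁅x, y⁆ ∈ C) hy ?_ ?_ ?_
      · rintro ⟨β, hβ⟩ y hyβ
        exact hC α hα β hβ x hxα y hyβ
      · show ⁅x, (0:L)⁆ ∈ C; rw [lie_zero]; exact C.zero_mem
      · intro y z hy hz; show ⁅x, y+z⁆ ∈ C; rw [lie_add]; exact C.add_mem hy hz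
    · intro y _; rw [zero_lie]; exact C.zero_mem
    · intro x z hx hz y hy; rw [add_lie]; exact C.add_mem (hx y hy) (hz y hy)
  have memh : ∀ γ ∈ insert (0 : Module.Dual K H) Ψ, Lsp γ ≤ hsub := by
    intro γ hγ; rw [hhs]; exact le_biSup _ hγ
  have memn : ∀ γ ∈ Φ \ Ψ, Lsp γ ≤ nsub := by
    intro γ hγ; rw [hn]; exact le_biSup _ hγ
  -- hsub is closed under brackets
  have condh : ∀ α ∈ insert (0 : Module.Dual K H) Ψ, ∀ β ∈ insert (0 : Module.Dual K H) Ψ,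
      ∀ x ∈ Lsp α, ∀ y ∈ Lsp β, ⁅x, y⁆ ∈ hsub := by
    intro α hα β hβ x hx y hy
    have hxy := hbrk α β x y hx hy
    by_cases hz : α + β = 0
    · rw [hz] at hxy; exact memh 0 (Set.mem_insert _ _) hxy
    by_cases hΦ' : α + β ∈ Φ
    · have hmem : α + β ∈ Ψ := by
        rcases hα with rfl | hα
        · rcases hβ with rfl | hβ
          · exact absurd (by simp) hz
          · simpa using hβ
        rcases hβ with rfl | hβ
        · simpa using hα
        · exact hclosed α hα β hβ hΦ'
      exact memh _ (Set.mem_insert_of_mem _ hmem) hxy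
    · rw [hLbot _ hz hΦ', Submodule.mem_bot] at hxy
      rw [hxy]; exact hsub.zero_mem
  -- brackets of nsub with hsub stay in nsub
  have condn : ∀ α ∈ Φ \ Ψ, ∀ β ∈ insert (0 : Module.Dual K H) Ψ,
      ∀ x ∈ Lsp α, ∀ y ∈ Lsp β, ⁅x, y⁆ ∈ nsub := by
    intro α hα β hβ x hx y hy
    have hxy := hbrk α β x y hx hy
    rcases hβ with rfl | hβ
    · rw [add_zero] at hxy; exact memn α hα hxy
    by_cases hz : α + β = 0
    · exfalso
      have : α = -β := eq_neg_of_add_eq_zero_left hz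
      exact hα.2 (this ▸ hsym β hβ)
    by_cases hΦ' : α + β ∈ Φ
    · have hmem : α + β ∈ Φ \ Ψ := by
        refine ⟨hΦ', fun hΨ' => ?_⟩
        have h2 := hclosed (α + β) hΨ' (-β) (hsym β hβ) (by simpa using hα.1)
        rw [add_neg_cancel_right] at h2
        exact hα.2 h2
      exact memn _ hmem hxy
    · rw [hLbot _ hz hΦ', Submodule.mem_bot] at hxy
      rw [hxy]; exact nsub.zero_mem
  have stabh : ∀ x ∈ hsub, ∀ y ∈ hsub, ⁅x, y⁆ ∈ hsub := by
    intro x hx y hy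
    exact key _ _ hsub condh x (hhs ▸ hx) y (hhs ▸ hy)
  have stabn : ∀ x ∈ nsub, ∀ y ∈ hsub, ⁅x, y⁆ ∈ nsub := by
    intro x hx y hy
    exact key _ _ nsub condn x (hn ▸ hx) y (hhs ▸ hy)
  refine ⟨disjoint_iff.mp hdisj, hsup, stabn, ?_⟩
  intro e he
  have hfx : ∀ x : L, (-(LieAlgebra.ad K L e) : L →ₗ[K] L) x = ⁅x, e⁆ := by
    intro x
    simp only [LinearMap.neg_apply, LieAlgebra.ad_apply]
    rw [← lie_skew, neg_neg]
  constructor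
  · conv_lhs => rw [← hsup]
    rw [Submodule.map_sup]
  · have h1 : Submodule.map (-(LieAlgebra.ad K L e) : L →ₗ[K] L) hsub ≤ hsub := by
      rw [Submodule.map_le_iff_le_comap]
      intro x hx
      rw [Submodule.mem_comap, hfx]
      exact stabh x hx e he
    have h2 : Submodule.map (-(LieAlgebra.ad K L e) : L →ₗ[K] L) nsub ≤ nsub := by
      rw [Submodule.map_le_iff_le_comap]
      intro x hx
      rw [Submodule.mem_comap, hfx]
      exact stabn x hx e he
    exact hdisj.mono h1 h2
end

section
/- Let K be a field of characteristic different from 2, V a finite-dimensional K-vector space, and B : V × V → K a non-degenerate symmetric bilinear form. Let a₁, ..., a_k be pairwise commuting linear automorphisms of V preserving B (B(aᵢv, aᵢw) = B(v,w) for all v,w) with aᵢ² = Id_V, and suppose that for all i ≠ j the (−1)-eigenspaces satisfy V_{−1}(aᵢ) ∩ V_{−1}(aⱼ) = {0}. Set W = ∩ᵢ V_{1}(aᵢ). Then V = W ⊕ V_{−1}(a₁) ⊕ ⋯ ⊕ V_{−1}(a_k), these summands are pairwise orthogonal with respect to B, and the restriction of B to each summand is non-degenerate. Moreover, for each i, aᵢ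 acts as −Id on V_{−1}(aᵢ) and as Id on W and on V_{−1}(aⱼ) for every j ≠ i. -/
/-!
Each involution `aᵢ` has the projection `(1 - aᵢ)/2` onto its `(-1)`-eigenspace. For `j ≠ i`,
`aⱼ` fixes `V₋₁(aᵢ)` pointwise: for `v ∈ V₋₁(aᵢ)` the vector `v - aⱼ v` lies in
`V₋₁(aᵢ) ∩ V₋₁(aⱼ) = 0` because the two maps commute. Hence `1 - ∑ᵢ (1 - aᵢ)/2` projects onto `W`,
and these projections give the direct sum. An isometry only pairs eigenvectors whose eigenvalues
multiply to `1`, which gives the orthogonality, and a summand of an orthogonal decomposition of a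
non-degenerate space is non-degenerate.
-/

open LinearMap

section

variable {K V : Type*} [Field K] [AddCommGroup V] [Module K V]

section Orthogonality

variable (B : V →ₗ[K] V →ₗ[K] K) {g : V →ₗ[K] V}

theorem apply_eq_zero_of_apply_eq_smul (hg : ∀ v w, B (g v) (g w) = B v w) {c d : K}
    (hcd : c * d ≠ 1) {v w : V} (hv : g v = c • v) (hw : g w = d • w) : B v w = 0 := by
  have h : B (g v) (g w) = c * d * B v w := by
    rw [hv, hw]
    simp only [map_smul, LinearMap.smul_apply, smul_eq_mul]
    ring
  have h' : (1 - c * d) * B v w = 0 := by linear_combination h - hg v w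
  exact (mul_eq_zero.1 h').resolve_left (sub_ne_zero.2 hcd.symm)

theorem neg_one_ne_one_of_two_ne_zero (h2 : (2 : K) ≠ 0) : (-1 : K) ≠ 1 :=
  fun h => h2 (by linear_combination -h)

theorem apply_eq_zero_of_apply_eq_self_of_apply_eq_neg (h2 : (2 : K) ≠ 0)
    (hg : ∀ v w, B (g v) (g w) = B v w) {v w : V} (hv : g v = v) (hw : g w = -w) :
    B v w = 0 :=
  apply_eq_zero_of_apply_eq_smul B hg (by rw [one_mul]; exact neg_one_ne_one_of_two_ne_zero h2)
    (by rwa [one_smul]) (by rwa [neg_one_smul])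

theorem apply_eq_zero_of_apply_eq_neg_of_apply_eq_self (h2 : (2 : K) ≠ 0)
    (hg : ∀ v w, B (g v) (g w) = B v w) {v w : V} (hv : g v = -v) (hw : g w = w) :
    B v w = 0 :=
  apply_eq_zero_of_apply_eq_smul B hg (by rw [mul_one]; exact neg_one_ne_one_of_two_ne_zero h2)
    (by rwa [neg_one_smul]) (by rwa [one_smul])

theorem eq_zero_of_sup_eq_top_of_le_orthogonalBilin (hnd : ∀ v : V, (∀ w : V, B v w = 0) → v = 0)
    {S T : Submodule K V} (hST : S ⊔ T = ⊤) (hT : T ≤ S.orthogonalBilin B) {v : V}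
    (hv : v ∈ S) (hvS : ∀ w ∈ S, B v w = 0) : v = 0 := by
  refine hnd v fun u => ?_
  obtain ⟨s, hs, t, ht, rfl⟩ := Submodule.mem_sup.1 (hST ▸ Submodule.mem_top : u ∈ S ⊔ T)
  rw [map_add, hvS s hs, hT ht v hv, add_zero]

end Orthogonality

theorem disjoint_of_eqOn_of_le_ker {S T : Submodule K V} (p : V →ₗ[K] V)
    (hS : ∀ v ∈ S, p v = v) (hT : T ≤ ker p) : Disjoint S T :=
  Submodule.disjoint_def.2 fun v hvS hvT => by rw [← hS v hvS, hT hvT]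

section Involution

variable {g : V →ₗ[K] V}

abbrev negSpace (g : V →ₗ[K] V) : Submodule K V := ker (g + LinearMap.id)

theorem mem_negSpace {v : V} : v ∈ negSpace g ↔ g v = -v := by
  simp [add_eq_zero_iff_eq_neg]

def negProj (g : V →ₗ[K] V) : V →ₗ[K] V := (2⁻¹ : K) • (LinearMap.id - g)

theorem negProj_apply (v : V) : negProj g v = (2⁻¹ : K) • (v - g v) := rfl

theorem apply_negProj (hg : ∀ v, g (g v) = v) (v : V) : g (negProj g v) = -negProj g v := by
  rw [negProj_apply, map_smul, map_sub, hg, ← smul_neg, neg_sub]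

theorem negProj_mem_negSpace (hg : ∀ v, g (g v) = v) (v : V) : negProj g v ∈ negSpace g :=
  mem_negSpace.2 (apply_negProj hg v)

theorem negProj_eq_self (h2 : (2 : K) ≠ 0) {v : V} (hv : g v = -v) : negProj g v = v := by
  rw [negProj_apply, hv, sub_neg_eq_add, ← two_smul K, smul_smul, inv_mul_cancel₀ h2, one_smul]

theorem negProj_eq_zero {v : V} (hv : g v = v) : negProj g v = 0 := by
  rw [negProj_apply, hv, sub_self, smul_zero]

theorem apply_eq_self_of_negProj_eq_zero (h2 : (2 : K) ≠ 0) {v : V} (hv : negProj g v = 0) :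
    g v = v := by
  rw [negProj_apply, smul_eq_zero, sub_eq_zero] at hv
  exact (hv.resolve_left (inv_ne_zero h2)).symm

theorem apply_eq_self_of_apply_eq_neg {h : V →ₗ[K] V} (hg : ∀ v, g (g v) = v)
    (hgh : g ∘ₗ h = h ∘ₗ g) (hdisj : ∀ v, g v = -v → h v = -v → v = 0) {v : V}
    (hv : h v = -v) : g v = v := by
  have hcomm : h (g v) = g (h v) := (LinearMap.congr_fun hgh v).symm
  refine (sub_eq_zero.1 (hdisj (v - g v) ?_ ?_)).symm
  · rw [map_sub, hg, neg_sub]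
  · rw [map_sub, hcomm, hv, map_neg, sub_neg_eq_add, neg_sub, neg_add_eq_sub]

end Involution

section CommutingInvolutions

variable {ι : Type*} {a : ι → V →ₗ[K] V}

abbrev fixSpace (a : ι → V →ₗ[K] V) : Submodule K V := ⨅ i, ker (a i - LinearMap.id)

theorem mem_fixSpace {v : V} : v ∈ fixSpace a ↔ ∀ i, a i v = v := by
  simp [sub_eq_zero]

theorem disjoint_negSpace_fixSpace_sup (h2 : (2 : K) ≠ 0)
    (hfix : ∀ i j, i ≠ j → ∀ v, a j v = -v → a i v = v) (i : ι) :
    Disjoint (negSpace (a i)) (fixSpace a ⊔ ⨆ (j) (_ : j ≠ i), negSpace (a j)) := by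
  refine disjoint_of_eqOn_of_le_ker (negProj (a i))
    (fun v hv => negProj_eq_self h2 (mem_negSpace.1 hv)) (sup_le ?_ (iSup₂_le fun j hji => ?_))
  · exact fun v hv => negProj_eq_zero (mem_fixSpace.1 hv i)
  · exact fun v hv => negProj_eq_zero (hfix i j (Ne.symm hji) v (mem_negSpace.1 hv))

variable [Fintype ι]

variable (a) in
def fixProj : V →ₗ[K] V := LinearMap.id - ∑ i, negProj (a i)

variable (a) in
theorem fixProj_apply (v : V) : fixProj a v = v - ∑ i, negProj (a i) v := by
  simp [fixProj]

variable (a) in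
theorem fixProj_add_sum_negProj (v : V) : fixProj a v + ∑ i, negProj (a i) v = v := by
  rw [fixProj_apply, sub_add_cancel]

theorem fixProj_eq_self {v : V} (hv : v ∈ fixSpace a) : fixProj a v = v := by
  simp [fixProj_apply, negProj_eq_zero (mem_fixSpace.1 hv _)]

theorem negProj_fixProj (h2 : (2 : K) ≠ 0) (hinv : ∀ i v, a i (a i v) = v)
    (hfix : ∀ i j, i ≠ j → ∀ v, a j v = -v → a i v = v) (i : ι) (v : V) :
    negProj (a i) (fixProj a v) = 0 := by
  rw [fixProj_apply, map_sub, map_sum, Finset.sum_eq_single i _ (by simp),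
    negProj_eq_self h2 (apply_negProj (hinv i) v), sub_self]
  exact fun j _ hji => negProj_eq_zero (hfix i j (Ne.symm hji) _ (apply_negProj (hinv j) v))

theorem fixProj_mem_fixSpace (h2 : (2 : K) ≠ 0) (hinv : ∀ i v, a i (a i v) = v)
    (hfix : ∀ i j, i ≠ j → ∀ v, a j v = -v → a i v = v) (v : V) : fixProj a v ∈ fixSpace a :=
  mem_fixSpace.2 fun i => apply_eq_self_of_negProj_eq_zero h2 (negProj_fixProj h2 hinv hfix i v)

theorem negSpace_le_ker_fixProj (h2 : (2 : K) ≠ 0)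
    (hfix : ∀ i j, i ≠ j → ∀ v, a j v = -v → a i v = v) (i : ι) :
    negSpace (a i) ≤ ker (fixProj a) := by
  intro v hv
  rw [mem_ker, fixProj_apply, Finset.sum_eq_single i _ (by simp),
    negProj_eq_self h2 (mem_negSpace.1 hv), sub_self]
  exact fun j _ hji => negProj_eq_zero (hfix j i hji v (mem_negSpace.1 hv))

theorem fixSpace_sup_iSup_negSpace (h2 : (2 : K) ≠ 0) (hinv : ∀ i v, a i (a i v) = v)
    (hfix : ∀ i j, i ≠ j → ∀ v, a j v = -v → a i v = v) :
    fixSpace a ⊔ ⨆ i, negSpace (a i) = ⊤ := by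
  refine eq_top_iff.2 fun v _ => ?_
  rw [← fixProj_add_sum_negProj a v]
  exact Submodule.add_mem_sup (fixProj_mem_fixSpace h2 hinv hfix v) <|
    Submodule.sum_mem _ fun i _ => Submodule.mem_iSup_of_mem i (negProj_mem_negSpace (hinv i) v)

theorem disjoint_fixSpace_iSup_negSpace (h2 : (2 : K) ≠ 0)
    (hfix : ∀ i j, i ≠ j → ∀ v, a j v = -v → a i v = v) :
    Disjoint (fixSpace a) (⨆ i, negSpace (a i)) :=
  disjoint_of_eqOn_of_le_ker (fixProj a) (fun _ => fixProj_eq_self)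
    (iSup_le (negSpace_le_ker_fixProj h2 hfix))

end CommutingInvolutions

section OrthogonalDecomposition

variable (B : V →ₗ[K] V →ₗ[K] K) {ι : Type*} {a : ι → V →ₗ[K] V}

theorem negSpace_le_orthogonalBilin_fixSpace (h2 : (2 : K) ≠ 0)
    (hpres : ∀ i, ∀ v w : V, B (a i v) (a i w) = B v w) (i : ι) :
    negSpace (a i) ≤ (fixSpace a).orthogonalBilin B := fun _ hw _ hv =>
  apply_eq_zero_of_apply_eq_self_of_apply_eq_neg B h2 (hpres i) (mem_fixSpace.1 hv i)
    (mem_negSpace.1 hw)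

theorem fixSpace_le_orthogonalBilin_negSpace (h2 : (2 : K) ≠ 0)
    (hpres : ∀ i, ∀ v w : V, B (a i v) (a i w) = B v w) (i : ι) :
    fixSpace a ≤ (negSpace (a i)).orthogonalBilin B := fun _ hw _ hv =>
  apply_eq_zero_of_apply_eq_neg_of_apply_eq_self B h2 (hpres i) (mem_negSpace.1 hv)
    (mem_fixSpace.1 hw i)

theorem negSpace_le_orthogonalBilin_negSpace (h2 : (2 : K) ≠ 0)
    (hpres : ∀ i, ∀ v w : V, B (a i v) (a i w) = B v w)
    (hfix : ∀ i j, i ≠ j → ∀ v, a j v = -v → a i v = v) {i j : ι} (hij : i ≠ j) :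
    negSpace (a j) ≤ (negSpace (a i)).orthogonalBilin B := fun _ hw _ hv =>
  apply_eq_zero_of_apply_eq_self_of_apply_eq_neg B h2 (hpres j)
    (hfix j i hij.symm _ (mem_negSpace.1 hv)) (mem_negSpace.1 hw)

variable [Fintype ι]

theorem eq_zero_of_mem_fixSpace (hnd : ∀ v : V, (∀ w : V, B v w = 0) → v = 0)
    (h2 : (2 : K) ≠ 0) (hpres : ∀ i, ∀ v w : V, B (a i v) (a i w) = B v w)
    (hinv : ∀ i v, a i (a i v) = v) (hfix : ∀ i j, i ≠ j → ∀ v, a j v = -v → a i v = v)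
    {v : V} (hv : v ∈ fixSpace a) (hvW : ∀ w ∈ fixSpace a, B v w = 0) : v = 0 :=
  eq_zero_of_sup_eq_top_of_le_orthogonalBilin B hnd (fixSpace_sup_iSup_negSpace h2 hinv hfix)
    (iSup_le (negSpace_le_orthogonalBilin_fixSpace B h2 hpres)) hv hvW

theorem eq_zero_of_mem_negSpace (hnd : ∀ v : V, (∀ w : V, B v w = 0) → v = 0)
    (h2 : (2 : K) ≠ 0) (hpres : ∀ i, ∀ v w : V, B (a i v) (a i w) = B v w)
    (hinv : ∀ i v, a i (a i v) = v) (hfix : ∀ i j, i ≠ j → ∀ v, a j v = -v → a i v = v)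
    (i : ι) {v : V} (hv : v ∈ negSpace (a i)) (hvN : ∀ w ∈ negSpace (a i), B v w = 0) :
    v = 0 := by
  refine eq_zero_of_sup_eq_top_of_le_orthogonalBilin B hnd
    (T := fixSpace a ⊔ ⨆ (j) (_ : j ≠ i), negSpace (a j))
    ?_ (sup_le (fixSpace_le_orthogonalBilin_negSpace B h2 hpres i)
      (iSup₂_le fun j hji => negSpace_le_orthogonalBilin_negSpace B h2 hpres hfix (Ne.symm hji)))
    hv hvN
  rw [sup_left_comm, ← iSup_split_single (fun j => negSpace (a j)) i,
    fixSpace_sup_iSup_negSpace h2 hinv hfix]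

end OrthogonalDecomposition

end

theorem stmt12_general {K V : Type*} [Field K] (h2 : (2 : K) ≠ 0)
    [AddCommGroup V] [Module K V]
    (B : V →ₗ[K] V →ₗ[K] K)
    (hnd : ∀ v : V, (∀ w : V, B v w = 0) → v = 0)
    {k : ℕ} (a : Fin k → V →ₗ[K] V)
    (hcomm : ∀ i j, (a i).comp (a j) = (a j).comp (a i))
    (hpres : ∀ i, ∀ v w : V, B (a i v) (a i w) = B v w)
    (hinv : ∀ i, ∀ v : V, a i (a i v) = v)
    (heig : ∀ i j, i ≠ j → ∀ v : V, a i v = -v → a j v = -v → v = 0) :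
    ∀ (W : Submodule K V) (N : Fin k → Submodule K V),
      W = (⨅ i, LinearMap.ker (a i - LinearMap.id)) →
      N = (fun i => LinearMap.ker (a i + LinearMap.id)) →
      -- `V = W ⊕ V₋₁(a₁) ⊕ ⋯ ⊕ V₋₁(a_k)` (internal direct sum)
      (W ⊔ ⨆ i, N i = ⊤) ∧
      Disjoint W (⨆ i, N i) ∧
      (∀ i, Disjoint (N i) (W ⊔ ⨆ (j : Fin k) (_ : j ≠ i), N j)) ∧
      -- the summands are pairwise orthogonal with respect to `B`
      (∀ i, ∀ v ∈ W, ∀ w ∈ N i, B v w = 0) ∧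
      (∀ i j, i ≠ j → ∀ v ∈ N i, ∀ w ∈ N j, B v w = 0) ∧
      -- the restriction of `B` to each summand is non-degenerate
      (∀ v ∈ W, (∀ w ∈ W, B v w = 0) → v = 0) ∧
      (∀ i, ∀ v ∈ N i, (∀ w ∈ N i, B v w = 0) → v = 0) ∧
      -- `aᵢ` acts as `-Id` on `V₋₁(aᵢ)`, and as `Id` on `W` and on `V₋₁(aⱼ)` for `j ≠ i`
      (∀ i, ∀ v ∈ N i, a i v = -v) ∧
      (∀ i, ∀ v ∈ W, a i v = v) ∧
      (∀ i j, i ≠ j → ∀ v ∈ N j, a i v = v) := by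
  rintro W N rfl rfl
  have hfix : ∀ i j, i ≠ j → ∀ v, a j v = -v → a i v = v := fun i j hij _ =>
    apply_eq_self_of_apply_eq_neg (hinv i) (hcomm i j) (heig i j hij)
  exact ⟨fixSpace_sup_iSup_negSpace h2 hinv hfix,
    disjoint_fixSpace_iSup_negSpace h2 hfix,
    disjoint_negSpace_fixSpace_sup h2 hfix,
    fun i v hv w hw => negSpace_le_orthogonalBilin_fixSpace B h2 hpres i hw v hv,
    fun i j hij v hv w hw => negSpace_le_orthogonalBilin_negSpace B h2 hpres hfix hij hw v hv,
    fun v => eq_zero_of_mem_fixSpace B hnd h2 hpres hinv hfix,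
    fun i v => eq_zero_of_mem_negSpace B hnd h2 hpres hinv hfix i,
    fun i v => mem_negSpace.1,
    fun i v hv => mem_fixSpace.1 hv i,
    fun i j hij v hv => hfix i j hij v (mem_negSpace.1 hv)⟩

/-- Let `K` be a field of characteristic `≠ 2`, `V` a finite-dimensional `K`-vector
space, `B` a non-degenerate symmetric bilinear form on `V`, and `a₁, …, a_k` pairwise
commuting involutive linear automorphisms of `V` preserving `B`, whose `(-1)`-eigenspaces
pairwise intersect trivially.  With `W = ⋂ᵢ V₁(aᵢ)` one has
`V = W ⊕ V₋₁(a₁) ⊕ ⋯ ⊕ V₋₁(a_k)`, the summands are pairwise orthogonal for `B`, the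
restriction of `B` to each summand is non-degenerate, and each `aᵢ` acts as `-Id` on
`V₋₁(aᵢ)` and as `Id` on `W` and on each `V₋₁(aⱼ)` with `j ≠ i`. -/
theorem stmt12 {K V : Type*} [Field K] (h2 : (2 : K) ≠ 0)
    [AddCommGroup V] [Module K V] [FiniteDimensional K V]
    (B : V →ₗ[K] V →ₗ[K] K)
    (hsymm : ∀ v w : V, B v w = B w v)
    (hnd : ∀ v : V, (∀ w : V, B v w = 0) → v = 0)
    {k : ℕ} (a : Fin k → V →ₗ[K] V)
    (hcomm : ∀ i j, (a i).comp (a j) = (a j).comp (a i))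
    (hpres : ∀ i, ∀ v w : V, B (a i v) (a i w) = B v w)
    (hinv : ∀ i, ∀ v : V, a i (a i v) = v)
    (heig : ∀ i j, i ≠ j → ∀ v : V, a i v = -v → a j v = -v → v = 0) :
    ∀ (W : Submodule K V) (N : Fin k → Submodule K V),
      W = (⨅ i, LinearMap.ker (a i - LinearMap.id)) →
      N = (fun i => LinearMap.ker (a i + LinearMap.id)) →
      -- `V = W ⊕ V₋₁(a₁) ⊕ ⋯ ⊕ V₋₁(a_k)` (internal direct sum)
      (W ⊔ ⨆ i, N i = ⊤) ∧
      Disjoint W (⨆ i, N i) ∧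
      (∀ i, Disjoint (N i) (W ⊔ ⨆ (j : Fin k) (_ : j ≠ i), N j)) ∧
      -- the summands are pairwise orthogonal with respect to `B`
      (∀ i, ∀ v ∈ W, ∀ w ∈ N i, B v w = 0) ∧
      (∀ i j, i ≠ j → ∀ v ∈ N i, ∀ w ∈ N j, B v w = 0) ∧
      -- the restriction of `B` to each summand is non-degenerate
      (∀ v ∈ W, (∀ w ∈ W, B v w = 0) → v = 0) ∧
      (∀ i, ∀ v ∈ N i, (∀ w ∈ N i, B v w = 0) → v = 0) ∧
      -- `aᵢ` acts as `-Id` on `V₋₁(aᵢ)`, and as `Id` on `W` and on `V₋₁(aⱼ)` for `j ≠ i`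
      (∀ i, ∀ v ∈ N i, a i v = -v) ∧
      (∀ i, ∀ v ∈ W, a i v = v) ∧
      (∀ i j, i ≠ j → ∀ v ∈ N j, a i v = v) :=
  stmt12_general h2 B hnd a hcomm hpres hinv heig
end
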